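/- arXiv:1607.04692 — 2 statements merged into one kernel-verified Lean document; each statement's English description precedes it below -/
import Mathlib

section
/- Let {H_n} be a Positive Linear Recurrence Sequence with length L and size S. Suppose E[K_r] = a·r + b + f(r) for all r > L, where a, b are constants and f(r) → 0 as r → ∞. Define Y_n(ω) = Z_n(ω) + f(n − L_n(ω)) − a·L_n(ω) for n > 2L. Then Var[Y_n] − E[(Z_n − a·L_n)²] → 0 as n → ∞. -/
open scoped BigOperators
open Filter

/-- A Positive Linear Recurrence Sequence (PLRS): a sequence `H` of positive integers
satisfying `H (n+1) = c 1 * H n + ⋯ + c L * H (n+1-L)` for `n ≥ L`, with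
`H 1 = 1` and initial conditions `H (n+1) = c 1 * H n + ⋯ + c n * H 1 + 1` for `1 ≤ n < L`. -/
structure PLRS where
  /-- the length of the recurrence -/
  L : ℕ
  /-- the coefficients of the recurrence (indexed from 1) -/
  c : ℕ → ℕ
  /-- the sequence itself (indexed from 1) -/
  H : ℕ → ℕ
  L_pos : 0 < L
  c1_pos : 0 < c 1
  cL_pos : 0 < c L
  H_pos : ∀ n, 1 ≤ n → 0 < H n
  H_one : H 1 = 1
  H_rec : ∀ n, L ≤ n → H (n + 1) = ∑ i ∈ Finset.Icc 1 L, c i * H (n + 1 - i)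
  H_init : ∀ n, 1 ≤ n → n < L → H (n + 1) = (∑ i ∈ Finset.Icc 1 n, c i * H (n + 1 - i)) + 1

namespace PLRS

/-- The size `S = c 1 + ⋯ + c L` of a PLRS. -/
def size (P : PLRS) : ℕ := ∑ i ∈ Finset.Icc 1 P.L, P.c i

/-- Legality of a coefficient sequence `(a_1, …, a_m)` (as a list), not including the
requirement `a_1 > 0`: either (Condition 1) `m < L` and `a_i = c_i` for all `i`, or
(Condition 2) there is `s ∈ {1, …, L}` with `a_1 = c_1, …, a_{s-1} = c_{s-1}`, `a_s < c_s`,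
and `(a_{s+1}, …, a_m)` legal (possibly empty). -/
inductive IsLegal (P : PLRS) : List ℕ → Prop
  | cond1 (m : ℕ) (h1 : 1 ≤ m) (h2 : m < P.L) :
      IsLegal P ((List.range m).map fun i => P.c (i + 1))
  | cond2 (s : ℕ) (hs1 : 1 ≤ s) (hs2 : s ≤ P.L) (a : ℕ) (ha : a < P.c s)
      (rest : List ℕ) (hrest : IsLegal P rest) :
      IsLegal P (((List.range (s - 1)).map fun i => P.c (i + 1)) ++ a :: rest)
  | cond2_last (s : ℕ) (hs1 : 1 ≤ s) (hs2 : s ≤ P.L) (a : ℕ) (ha : a < P.c s) :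
      IsLegal P (((List.range (s - 1)).map fun i => P.c (i + 1)) ++ [a])

/-- A legal decomposition: a legal coefficient sequence with `a_1 > 0`. -/
def LegalDecomp (P : PLRS) (l : List ℕ) : Prop := P.IsLegal l ∧ 0 < l.headI

/-- The value `∑_{i=1}^m a_i H_{m+1-i}` of a coefficient sequence `(a_1, …, a_m)`. -/
def value (P : PLRS) (l : List ℕ) : ℕ :=
  ∑ i ∈ Finset.range l.length, l.getD i 0 * P.H (l.length - i)

/-- `Ω_n`: the set of legal decompositions of integers in `[H_n, H_{n+1})`. -/
def Omega (P : PLRS) (n : ℕ) : Set (List ℕ) :=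
  {l | P.LegalDecomp l ∧ P.H n ≤ P.value l ∧ P.value l < P.H (n + 1)}

/-- Expectation of `g` under the uniform probability measure on a (finite) set `A`. -/
noncomputable def expectOn (A : Set (List ℕ)) (g : List ℕ → ℝ) : ℝ :=
  (∑ᶠ l ∈ A, g l) / (A.ncard : ℝ)

/-- Variance of `g` under the uniform probability measure on a (finite) set `A`. -/
noncomputable def varOn (A : Set (List ℕ)) (g : List ℕ → ℝ) : ℝ :=
  expectOn A (fun l => g l ^ 2) - (expectOn A g) ^ 2

/-- Expectation of `g` under the uniform probability measure on `Ω_n`. -/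
noncomputable def expect (P : PLRS) (n : ℕ) (g : List ℕ → ℝ) : ℝ := expectOn (P.Omega n) g

/-- Probability of the event `A` under the uniform probability measure on `Ω_n`. -/
noncomputable def prob (P : PLRS) (n : ℕ) (A : Set (List ℕ)) : ℝ :=
  ((P.Omega n ∩ A).ncard : ℝ) / ((P.Omega n).ncard : ℝ)

/-- `E[K_n]`, the expected number of summands on `Ω_n`. -/
noncomputable def expectK (P : PLRS) (n : ℕ) : ℝ := P.expect n fun l => (l.sum : ℝ)

/-- `Var[K_n]`, the variance of the number of summands on `Ω_n`. -/
noncomputable def varK (P : PLRS) (n : ℕ) : ℝ := varOn (P.Omega n) fun l => (l.sum : ℝ)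

/-- The first index (0-based) at which the coefficient list disagrees with `c`. -/
def firstMismatch (P : PLRS) (l : List ℕ) : Option ℕ :=
  (List.range l.length).find? fun i => l.getD i 0 != P.c (i + 1)

/-- The block decomposition of a legal coefficient sequence: repeatedly split off the
Type 2 block `(c_1, …, c_{s-1}, a_s)` with `a_s ≠ c_s`; if the whole remaining sequence
agrees with `c` it is a single (Type 1) block. -/
def blocks (P : PLRS) (l : List ℕ) : List (List ℕ) :=
  if h : l = [] then []
  else
    match P.firstMismatch l with
    | none => [l]
    | some i => l.take (i + 1) :: P.blocks (l.drop (i + 1))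
termination_by l.length
decreasing_by
  have hl : 0 < l.length := List.length_pos_iff.mpr h
  simp only [List.length_drop]
  omega

/-- The second-to-last block of a legal decomposition. -/
def stlBlock (P : PLRS) (l : List ℕ) : List ℕ := ((P.blocks l).reverse).getD 1 []

/-- `Z_n(ω)`: the size (sum of coefficients) of the second-to-last block. -/
def Z (P : PLRS) (l : List ℕ) : ℕ := (P.stlBlock l).sum

/-- The length function `ℓ(t)`: the length of the Type 2 block of size `t`, i.e., the least
`s` with `t < c_1 + ⋯ + c_s`. -/
noncomputable def ell (P : PLRS) (t : ℕ) : ℕ :=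
  sInf {s : ℕ | t < ∑ i ∈ Finset.Icc 1 s, P.c i}

/-- `L_n(ω) = ℓ(Z_n(ω))`: the length of the second-to-last block. -/
noncomputable def Lfn (P : PLRS) (l : List ℕ) : ℕ := P.ell (P.Z l)

/-- `h_t`: remove the second-to-last block of a legal decomposition. -/
def removeSTL (P : PLRS) (l : List ℕ) : List ℕ :=
  ((((P.blocks l).reverse).eraseIdx 1).reverse).flatten

/-- The Type 2 block of size `t`: `(c_1, …, c_{ℓ(t)-1}, t - (c_1 + ⋯ + c_{ℓ(t)-1}))`. -/
noncomputable def type2Block (P : PLRS) (t : ℕ) : List ℕ :=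
  ((List.range (P.ell t - 1)).map fun i => P.c (i + 1)) ++
    [t - ∑ i ∈ Finset.Icc 1 (P.ell t - 1), P.c i]

/-- Insert the Type 2 block of size `t` immediately before the last block. -/
noncomputable def insertSTL (P : PLRS) (t : ℕ) (l : List ℕ) : List ℕ :=
  ((((P.blocks l).reverse).insertIdx 1 (P.type2Block t)).reverse).flatten

/-- A Type 1 block: `(c_1, …, c_m)` with `1 ≤ m < L`. -/
def IsType1Block (P : PLRS) (bl : List ℕ) : Prop :=
  ∃ m, 1 ≤ m ∧ m < P.L ∧ bl = (List.range m).map fun i => P.c (i + 1)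

/-- A Type 2 block: `(c_1, …, c_{s-1}, a)` with `1 ≤ s ≤ L` and `a < c_s`. -/
def IsType2Block (P : PLRS) (bl : List ℕ) : Prop :=
  ∃ s, 1 ≤ s ∧ s ≤ P.L ∧ ∃ a, a < P.c s ∧
    bl = ((List.range (s - 1)).map fun i => P.c (i + 1)) ++ [a]

/-- Conditional expectation of `g` on `Ω_n` given `Z_n = t`. -/
noncomputable def condExpect (P : PLRS) (n t : ℕ) (g : List ℕ → ℝ) : ℝ :=
  expectOn (P.Omega n ∩ {l | P.Z l = t}) g

end PLRS

open PLRS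

/-!
Write `W_n = Z_n - a L_n` and `Y_n = W_n + f (n - L_n)`. Then
`Var[Y_n] - E[W_n²] = E[(Y_n - W_n)(Y_n + W_n)] - E[Y_n]²`; since `W_n` is bounded
(`Z_n ≤ S`, `L_n ≤ L`) and `Y_n - W_n = f (n - L_n)` is uniformly small, it suffices that
`E[Y_n] → 0`. In fact `E[Y_n] = f n`: deleting the second-to-last block, of size `t` and length
`ℓ(t)`, is a bijection from `{ω ∈ Ω_n | Z_n ω = t}` onto `Ω_{n - ℓ(t)}` that lowers the number of
summands by `t`, so `E[K_n] = E[E[K_{n - L_n}] + Z_n]`, and the hypothesis on `E[K_r]` turns this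
into `a n + b + f n = a n + b + E[Y_n]`.
-/

lemma sum_Icc_one_eq_sum_range {M : Type*} [AddCommMonoid M] (g : ℕ → M) (m : ℕ) :
    ∑ i ∈ Finset.Icc 1 m, g i = ∑ i ∈ Finset.range m, g (i + 1) := by
  rw [Finset.range_eq_Ico, Finset.sum_Ico_add', ← Finset.Ico_add_one_right_eq_Icc]

lemma List.headI_append_of_ne_nil {α : Type*} [Inhabited α] {u : List α} (hu : u ≠ [])
    (v : List α) : (u ++ v).headI = u.headI := by
  cases u with
  | nil => exact absurd rfl hu
  | cons => rfl

namespace PLRS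

section UniformExpectation

variable {A : Set (List ℕ)}

lemma finsum_mem_const_of_finite (hA : A.Finite) (r : ℝ) : ∑ᶠ _l ∈ A, r = A.ncard * r := by
  rw [← hA.coe_toFinset, finsum_mem_coe_finset, Finset.sum_const, nsmul_eq_mul,
    Set.ncard_coe_finset]

lemma finsum_mem_expectOn (hA : A.Finite) (g : List ℕ → ℝ) :
    ∑ᶠ _l ∈ A, expectOn A g = ∑ᶠ l ∈ A, g l := by
  rw [finsum_mem_const_of_finite hA, expectOn]
  rcases eq_or_ne A.ncard 0 with h | h
  · simp [(Set.ncard_eq_zero hA).1 h]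
  · field_simp

lemma expectOn_sub (hA : A.Finite) (g₁ g₂ : List ℕ → ℝ) :
    expectOn A (fun l => g₁ l - g₂ l) = expectOn A g₁ - expectOn A g₂ := by
  rw [expectOn, expectOn, expectOn, finsum_mem_sub_distrib g₁ g₂ hA, sub_div]

lemma abs_expectOn_le {g : List ℕ → ℝ} {B : ℝ} (hB : 0 ≤ B) (h : ∀ l ∈ A, |g l| ≤ B) :
    |expectOn A g| ≤ B := by
  by_cases hA : A.Finite
  · rcases eq_or_ne A.ncard 0 with h0 | h0
    · simpa [expectOn, h0] using hB
    · have hpos : (0 : ℝ) < A.ncard := by positivity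
      rw [expectOn, abs_div, abs_of_pos hpos, div_le_iff₀ hpos, mul_comm,
        ← finsum_mem_const_of_finite hA, ← hA.coe_toFinset, finsum_mem_coe_finset,
        finsum_mem_coe_finset]
      exact (Finset.abs_sum_le_sum_abs _ _).trans
        (Finset.sum_le_sum fun l hl => h l (hA.mem_toFinset.1 hl))
  · simpa [expectOn, Set.Infinite.ncard hA] using hB

theorem tendsto_varOn_sub_expectOn_sq {A : ℕ → Set (List ℕ)} (hA : ∀ n, (A n).Finite)
    {Y W : ℕ → List ℕ → ℝ} {C : ℝ} {δ : ℕ → ℝ}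
    (hW : ∀ᶠ n in atTop, ∀ l ∈ A n, |W n l| ≤ C)
    (hYW : ∀ᶠ n in atTop, ∀ l ∈ A n, |Y n l - W n l| ≤ δ n)
    (hδ : Tendsto δ atTop (nhds 0))
    (hY : Tendsto (fun n => expectOn (A n) (Y n)) atTop (nhds 0)) :
    Tendsto (fun n => varOn (A n) (Y n) - expectOn (A n) (fun l => W n l ^ 2))
      atTop (nhds 0) := by
  have hsplit : ∀ n, varOn (A n) (Y n) - expectOn (A n) (fun l => W n l ^ 2) =
      expectOn (A n) (fun l => Y n l ^ 2 - W n l ^ 2) - expectOn (A n) (Y n) ^ 2 := by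
    intro n
    rw [expectOn_sub (hA n), varOn]
    ring
  have hbound : Tendsto (fun n => |δ n| * (2 * |C| + |δ n|)) atTop (nhds 0) := by
    simpa using hδ.abs.mul (tendsto_const_nhds.add hδ.abs)
  have hsq : Tendsto (fun n => expectOn (A n) (fun l => Y n l ^ 2 - W n l ^ 2))
      atTop (nhds 0) := by
    refine squeeze_zero_norm' ?_ hbound
    filter_upwards [hW, hYW] with n hWn hYWn
    refine abs_expectOn_le (by positivity) fun l hl => ?_
    have hsum : |Y n l + W n l| ≤ 2 * |C| + |δ n| := by
      calc |Y n l + W n l| = |(Y n l - W n l) + 2 * W n l| := by ring_nf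
        _ ≤ |δ n| + 2 * |C| := by
          grw [abs_add_le, abs_mul, hYWn l hl, hWn l hl, abs_two]
          gcongr <;> exact le_abs_self _
        _ = 2 * |C| + |δ n| := add_comm _ _
    calc |Y n l ^ 2 - W n l ^ 2| = |Y n l - W n l| * |Y n l + W n l| := by
          rw [← abs_mul]; ring_nf
      _ ≤ |δ n| * (2 * |C| + |δ n|) :=
          mul_le_mul ((hYWn l hl).trans (le_abs_self _)) hsum (abs_nonneg _) (abs_nonneg _)
  simpa [hsplit] using hsq.sub (hY.pow 2)

end UniformExpectation

variable (P : PLRS)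

def coeffSum (s : ℕ) : ℕ := ∑ i ∈ Finset.Icc 1 s, P.c i

def cPrefix (s : ℕ) : List ℕ := (List.range s).map fun i => P.c (i + 1)

lemma coeffSum_succ (s : ℕ) : P.coeffSum (s + 1) = P.coeffSum s + P.c (s + 1) :=
  Finset.sum_Icc_succ_top (by omega) _

lemma coeffSum_mono : Monotone P.coeffSum := fun _ _ h =>
  Finset.sum_le_sum_of_subset (Finset.Icc_subset_Icc_right h)

lemma coeffSum_L : P.coeffSum P.L = P.size := rfl

@[simp]
lemma length_cPrefix (s : ℕ) : (P.cPrefix s).length = s := by simp [cPrefix]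

@[simp]
lemma sum_cPrefix (s : ℕ) : (P.cPrefix s).sum = P.coeffSum s := by
  induction s with
  | zero => rfl
  | succ s ih => simp [cPrefix, List.range_succ, coeffSum_succ, ← ih]

lemma getD_cPrefix_append {s i : ℕ} (hi : i < s) (w : List ℕ) :
    (P.cPrefix s ++ w).getD i 0 = P.c (i + 1) := by
  rw [List.getD_append _ _ _ _ (by simpa using hi)]
  simp [cPrefix, hi]

lemma le_size_of_mem_cPrefix {s x : ℕ} (hs : s ≤ P.L) (hx : x ∈ P.cPrefix s) : x ≤ P.size := by
  obtain ⟨i, hi, rfl⟩ := List.mem_map.1 hx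
  exact Finset.single_le_sum (fun _ _ => Nat.zero_le _)
    (Finset.mem_Icc.2 ⟨by omega, by simp at hi; omega⟩)

lemma c_le_size {s : ℕ} (hs : s < P.L) : P.c (s + 1) ≤ P.size := by
  rw [← coeffSum_L]
  exact (Nat.le_add_left _ _).trans ((coeffSum_succ P s).symm.le.trans (P.coeffSum_mono hs))

lemma ell_eq_succ_iff {t s : ℕ} :
    P.ell t = s + 1 ↔ t < P.coeffSum (s + 1) ∧ P.coeffSum s ≤ t := by
  rw [ell, Nat.sInf_upward_closed_eq_succ_iff
    (fun _ _ h ht => ht.trans_le (P.coeffSum_mono h))]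
  simp [coeffSum]

lemma exists_ell_eq_succ {t : ℕ} (ht : t < P.size) :
    ∃ s < P.L, P.ell t = s + 1 ∧ P.coeffSum s ≤ t ∧ t < P.coeffSum (s + 1) := by
  have hmem : P.ell t ∈ {s | t < P.coeffSum s} := Nat.sInf_mem ⟨P.L, ht⟩
  have hle : P.ell t ≤ P.L := Nat.sInf_le (show t < P.coeffSum P.L from ht)
  obtain ⟨s, hs⟩ := Nat.exists_eq_succ_of_ne_zero (n := P.ell t) fun h0 => by
    simp [h0, coeffSum] at hmem
  exact ⟨s, by omega, hs, ((P.ell_eq_succ_iff).1 hs).2, ((P.ell_eq_succ_iff).1 hs).1⟩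

lemma isType2Block_iff {b : List ℕ} :
    P.IsType2Block b ↔ ∃ s < P.L, ∃ a < P.c (s + 1), b = P.cPrefix s ++ [a] := by
  constructor
  · rintro ⟨s, hs1, hsL, a, ha, rfl⟩
    obtain ⟨s, rfl⟩ := Nat.exists_eq_add_of_le' hs1
    exact ⟨s, by omega, a, ha, by simp [cPrefix]⟩
  · rintro ⟨s, hs, a, ha, rfl⟩
    exact ⟨s + 1, by omega, hs, a, ha, by simp [cPrefix]⟩

lemma ell_sum_cPrefix_append {s a : ℕ} (ha : a < P.c (s + 1)) :
    P.ell (P.cPrefix s ++ [a]).sum = s + 1 := by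
  rw [ell_eq_succ_iff, coeffSum_succ]
  simp
  omega

lemma type2Block_eq {t s : ℕ} (hs : P.ell t = s + 1) :
    P.type2Block t = P.cPrefix s ++ [t - P.coeffSum s] := by
  simp [type2Block, hs, cPrefix, coeffSum]

lemma IsType2Block.eq_type2Block_sum {b : List ℕ} (hb : P.IsType2Block b) :
    b = P.type2Block b.sum := by
  obtain ⟨s, -, a, ha, rfl⟩ := (P.isType2Block_iff).1 hb
  rw [type2Block_eq P (P.ell_sum_cPrefix_append ha)]
  simp

lemma IsType2Block.sum_lt_size {b : List ℕ} (hb : P.IsType2Block b) : b.sum < P.size := by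
  obtain ⟨s, hs, a, ha, rfl⟩ := (P.isType2Block_iff).1 hb
  have := P.coeffSum_mono (Nat.succ_le_of_lt hs)
  rw [coeffSum_succ, coeffSum_L] at this
  simp
  omega

lemma IsType2Block.length_eq_ell_sum {b : List ℕ} (hb : P.IsType2Block b) :
    b.length = P.ell b.sum := by
  obtain ⟨s, -, a, ha, rfl⟩ := (P.isType2Block_iff).1 hb
  rw [P.ell_sum_cPrefix_append ha]
  simp

lemma IsType2Block.length_le {b : List ℕ} (hb : P.IsType2Block b) : b.length ≤ P.L := by
  obtain ⟨s, hs, a, -, rfl⟩ := (P.isType2Block_iff).1 hb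
  simp
  omega

lemma isType2Block_type2Block {t : ℕ} (ht : t < P.size) : P.IsType2Block (P.type2Block t) := by
  obtain ⟨s, hs, hell, h1, h2⟩ := P.exists_ell_eq_succ ht
  rw [coeffSum_succ] at h2
  exact (P.isType2Block_iff).2 ⟨s, hs, t - P.coeffSum s, by omega, P.type2Block_eq hell⟩

lemma sum_type2Block {t : ℕ} (ht : t < P.size) : (P.type2Block t).sum = t := by
  obtain ⟨s, -, hell, h1, -⟩ := P.exists_ell_eq_succ ht
  rw [P.type2Block_eq hell]
  simp
  omega

lemma value_nil : P.value [] = 0 := rfl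

lemma value_cons (x : ℕ) (l : List ℕ) :
    P.value (x :: l) = x * P.H (l.length + 1) + P.value l := by
  simp only [value, List.length_cons, Finset.sum_range_succ', List.getD_cons_succ,
    List.getD_cons_zero, Nat.sub_zero, Nat.add_sub_add_right]
  rw [add_comm]

lemma value_cPrefix_append (s : ℕ) (w : List ℕ) :
    P.value (P.cPrefix s ++ w) =
      ∑ j ∈ Finset.range s, P.c (j + 1) * P.H (s + w.length - j) + P.value w := by
  rw [value, List.length_append, length_cPrefix, Finset.sum_range_add, add_comm s, value]
  congr 1
  · refine Finset.sum_congr rfl fun j hj => ?_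
    rw [P.getD_cPrefix_append (Finset.mem_range.1 hj), add_comm w.length]
  · refine Finset.sum_congr rfl fun j _ => ?_
    rw [List.getD_append_right _ _ _ _ (by simp)]
    simp only [length_cPrefix, Nat.add_sub_cancel_left]
    congr 2
    omega

lemma H_succ_of_lt {m : ℕ} (hm : 1 ≤ m) (hmL : m < P.L) :
    P.H (m + 1) = ∑ j ∈ Finset.range m, P.c (j + 1) * P.H (m - j) + 1 := by
  simp [P.H_init m hm hmL, sum_Icc_one_eq_sum_range]

lemma H_succ_of_le {m : ℕ} (hLm : P.L ≤ m) :
    P.H (m + 1) = ∑ j ∈ Finset.range P.L, P.c (j + 1) * P.H (m - j) := by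
  simp [P.H_rec m hLm, sum_Icc_one_eq_sum_range]

lemma sum_le_H_succ {s m : ℕ} (hsL : s ≤ P.L) (hsm : s ≤ m) (hm : 1 ≤ m) :
    ∑ j ∈ Finset.range s, P.c (j + 1) * P.H (m - j) ≤ P.H (m + 1) := by
  rcases lt_or_ge m P.L with hmL | hLm
  · rw [P.H_succ_of_lt hm hmL]
    exact (Finset.sum_le_sum_of_subset (Finset.range_subset_range.2 hsm)).trans (Nat.le_succ _)
  · rw [P.H_succ_of_le hLm]
    exact Finset.sum_le_sum_of_subset (Finset.range_subset_range.2 hsL)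

lemma H_le_H_succ {m : ℕ} (hm : 1 ≤ m) : P.H m ≤ P.H (m + 1) := by
  have h := P.sum_le_H_succ P.L_pos hm hm
  simp only [zero_add, Finset.sum_range_one, Nat.sub_zero] at h
  exact (Nat.le_mul_of_pos_left _ P.c1_pos).trans h

lemma H_mono {m n : ℕ} (hm : 1 ≤ m) (hmn : m ≤ n) : P.H m ≤ P.H n := by
  obtain ⟨m, rfl⟩ := Nat.exists_eq_add_of_le' hm
  obtain ⟨n, rfl⟩ := Nat.exists_eq_add_of_le' (hm.trans hmn)
  exact monotone_nat_of_le_succ (f := fun k => P.H (k + 1)) (fun k => P.H_le_H_succ (by omega))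
    (by omega : m ≤ n)

lemma value_cPrefix_append_cons_lt {s a : ℕ} (hs : s < P.L) (ha : a < P.c (s + 1))
    {rest : List ℕ} (hrest : P.value rest < P.H (rest.length + 1)) :
    P.value (P.cPrefix s ++ a :: rest) < P.H ((P.cPrefix s ++ a :: rest).length + 1) := by
  have hlast : a * P.H (rest.length + 1) + P.value rest < P.c (s + 1) * P.H (rest.length + 1) :=
    calc a * P.H (rest.length + 1) + P.value rest < (a + 1) * P.H (rest.length + 1) := by
          rw [add_one_mul]; omega
      _ ≤ P.c (s + 1) * P.H (rest.length + 1) := Nat.mul_le_mul_right _ ha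
  have hrec := P.sum_le_H_succ (m := s + (rest.length + 1)) hs (by omega) (by omega)
  rw [Finset.sum_range_succ, show s + (rest.length + 1) - s = rest.length + 1 by omega] at hrec
  rw [value_cPrefix_append, value_cons]
  simp only [List.length_append, length_cPrefix, List.length_cons]
  omega

lemma IsLegal.value_lt {l : List ℕ} (hl : P.IsLegal l) : P.value l < P.H (l.length + 1) := by
  induction hl with
  | cond1 m hm hmL =>
    have h := P.value_cPrefix_append m []
    rw [List.append_nil, value_nil] at h
    change P.value (P.cPrefix m) < P.H ((P.cPrefix m).length + 1)
    rw [h, length_cPrefix, P.H_succ_of_lt hm hmL]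
    simp
  | cond2 s hs1 hsL a ha rest _ ih =>
    obtain ⟨s, rfl⟩ := Nat.exists_eq_add_of_le' hs1
    exact P.value_cPrefix_append_cons_lt (by omega) ha ih
  | cond2_last s hs1 hsL a ha =>
    obtain ⟨s, rfl⟩ := Nat.exists_eq_add_of_le' hs1
    exact P.value_cPrefix_append_cons_lt (rest := []) (by omega) ha (by simp [value_nil, P.H_one])

lemma H_length_le_value {l : List ℕ} (hl : 0 < l.headI) : P.H l.length ≤ P.value l := by
  cases l with
  | nil => simp at hl
  | cons x l =>
    rw [value_cons, List.length_cons]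
    exact (Nat.le_mul_of_pos_left _ hl).trans (Nat.le_add_right _ _)

-- `H` is only weakly increasing (`H ≡ 1` when `L = c 1 = 1`), which suffices here.
lemma Omega_eq (n : ℕ) : P.Omega n = {l | P.LegalDecomp l ∧ l.length = n} := by
  ext l
  refine ⟨fun ⟨hl, hlo, hhi⟩ => ⟨hl, ?_⟩, fun ⟨hl, hn⟩ => ?_⟩
  · have hge := P.H_length_le_value hl.2
    have hlt := hl.1.value_lt
    have hpos : 1 ≤ l.length := by
      cases l with
      | nil => exact absurd hl.2 (by simp)
      | cons => simp
    by_contra hne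
    rcases lt_or_gt_of_ne hne with h | h
    · have := P.H_mono (m := l.length + 1) (n := n) (by omega) (by omega)
      omega
    · have := P.H_mono (m := n + 1) (n := l.length) (by omega) (by omega)
      omega
  · subst hn
    exact ⟨hl, P.H_length_le_value hl.2, hl.1.value_lt⟩

lemma IsLegal.le_size {l : List ℕ} (hl : P.IsLegal l) : ∀ x ∈ l, x ≤ P.size := by
  induction hl with
  | cond1 m _ hmL => exact fun x hx => P.le_size_of_mem_cPrefix hmL.le hx
  | cond2 s hs1 hsL a ha rest _ ih =>
    obtain ⟨s, rfl⟩ := Nat.exists_eq_add_of_le' hs1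
    intro x hx
    rcases List.mem_append.1 hx with hx | hx | ⟨_, hx⟩
    · exact P.le_size_of_mem_cPrefix (by omega) hx
    · exact ha.le.trans (P.c_le_size (by omega))
    · exact ih x hx
  | cond2_last s hs1 hsL a ha =>
    obtain ⟨s, rfl⟩ := Nat.exists_eq_add_of_le' hs1
    intro x hx
    rcases List.mem_append.1 hx with hx | hx
    · exact P.le_size_of_mem_cPrefix (by omega) hx
    · exact (List.mem_singleton.1 hx) ▸ ha.le.trans (P.c_le_size (by omega))

lemma Omega_finite (n : ℕ) : (P.Omega n).Finite := by
  refine ((List.finite_length_eq (Fin (P.size + 1)) n).image (List.map Fin.val)).subset ?_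
  rw [Omega_eq]
  rintro l ⟨hl, rfl⟩
  refine ⟨l.pmap (fun x hx => ⟨x, Nat.lt_succ_of_le hx⟩) hl.1.le_size, by simp, ?_⟩
  simp [List.map_pmap]

@[simp]
lemma blocks_nil : P.blocks [] = [] := by rw [blocks]; simp

lemma firstMismatch_cPrefix (m : ℕ) : P.firstMismatch (P.cPrefix m) = none := by
  refine List.find?_eq_none.2 fun i hi => ?_
  have hi : i < m := by simpa using hi
  simpa using P.getD_cPrefix_append hi []

lemma firstMismatch_cPrefix_append_cons {s a : ℕ} (ha : a ≠ P.c (s + 1)) (rest : List ℕ) :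
    P.firstMismatch (P.cPrefix s ++ a :: rest) = some s := by
  refine List.find?_range_eq_some.2 ⟨?_, by simp, fun j hj => ?_⟩
  · rw [List.getD_append_right _ _ _ _ (by simp)]
    simpa using ha
  · simpa using P.getD_cPrefix_append hj (a :: rest)

lemma blocks_cPrefix {m : ℕ} (hm : 1 ≤ m) : P.blocks (P.cPrefix m) = [P.cPrefix m] := by
  rw [blocks, dif_neg (List.ne_nil_of_length_pos (by simp; omega)), firstMismatch_cPrefix]

lemma blocks_cPrefix_append_cons {s a : ℕ} (ha : a ≠ P.c (s + 1)) (rest : List ℕ) :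
    P.blocks (P.cPrefix s ++ a :: rest) = (P.cPrefix s ++ [a]) :: P.blocks rest := by
  rw [blocks, dif_neg (by simp), firstMismatch_cPrefix_append_cons P ha]
  simp [List.take_append, List.drop_append, List.drop_eq_nil_of_le]

def IsLegalBlocks (bs : List (List ℕ)) : Prop :=
  ∃ init last, bs = init ++ [last] ∧ (∀ b ∈ init, P.IsType2Block b) ∧
    (P.IsType1Block last ∨ P.IsType2Block last)

variable {P}

lemma IsType2Block.ne_nil {b : List ℕ} (hb : P.IsType2Block b) : b ≠ [] := by
  obtain ⟨s, -, a, -, rfl⟩ := (P.isType2Block_iff).1 hb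
  simp

lemma IsLegalBlocks.blocks_flatten {bs : List (List ℕ)} (h : P.IsLegalBlocks bs) :
    P.blocks bs.flatten = bs := by
  obtain ⟨init, last, rfl, hinit, hlast⟩ := h
  induction init with
  | nil =>
    rw [List.nil_append, List.flatten_singleton]
    rcases hlast with ⟨m, hm, -, rfl⟩ | hlast
    · exact P.blocks_cPrefix hm
    · obtain ⟨s, -, a, ha, rfl⟩ := (P.isType2Block_iff).1 hlast
      simpa using P.blocks_cPrefix_append_cons ha.ne []
  | cons b init ih =>
    obtain ⟨s, -, a, ha, rfl⟩ := (P.isType2Block_iff).1 (hinit b (by simp))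
    rw [List.cons_append, List.flatten_cons, List.append_assoc, List.singleton_append,
      P.blocks_cPrefix_append_cons ha.ne, ih fun x hx => hinit x (by simp [hx])]

lemma IsLegalBlocks.isLegal_flatten {bs : List (List ℕ)} (h : P.IsLegalBlocks bs) :
    P.IsLegal bs.flatten := by
  obtain ⟨init, last, rfl, hinit, hlast⟩ := h
  induction init with
  | nil =>
    rcases hlast with ⟨m, hm, hmL, rfl⟩ | ⟨s, hs1, hsL, a, ha, rfl⟩
    · simpa using IsLegal.cond1 m hm hmL
    · simpa using IsLegal.cond2_last s hs1 hsL a ha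
  | cons b init ih =>
    obtain ⟨s, hs1, hsL, a, ha, rfl⟩ := hinit b (by simp)
    simpa using IsLegal.cond2 s hs1 hsL a ha _ (ih fun x hx => hinit x (by simp [hx]))

lemma IsLegal.exists_isLegalBlocks {l : List ℕ} (hl : P.IsLegal l) :
    ∃ bs, P.IsLegalBlocks bs ∧ bs.flatten = l := by
  induction hl with
  | cond1 m hm hmL =>
    exact ⟨[P.cPrefix m], ⟨[], _, rfl, by simp, .inl ⟨m, hm, hmL, rfl⟩⟩, by simp [cPrefix]⟩
  | cond2 s hs1 hsL a ha rest _ ih =>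
    obtain ⟨_, ⟨init, last, rfl, hinit, hlast⟩, rfl⟩ := ih
    refine ⟨(P.cPrefix (s - 1) ++ [a]) :: (init ++ [last]),
      ⟨_ :: init, last, rfl, ?_, hlast⟩, by simp [cPrefix]⟩
    intro x hx
    rcases List.mem_cons.1 hx with rfl | hx
    exacts [⟨s, hs1, hsL, a, ha, rfl⟩, hinit x hx]
  | cond2_last s hs1 hsL a ha =>
    exact ⟨[_], ⟨[], _, rfl, by simp, .inr ⟨s, hs1, hsL, a, ha, rfl⟩⟩, by simp⟩

lemma IsLegalBlocks.length_flatten_le {bs : List (List ℕ)} (h : P.IsLegalBlocks bs) :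
    bs.flatten.length ≤ bs.length * P.L := by
  obtain ⟨init, last, rfl, hinit, hlast⟩ := h
  have hle : ∀ b ∈ init ++ [last], b.length ≤ P.L := by
    rintro b hb
    rcases List.mem_append.1 hb with hb | hb
    · exact (hinit b hb).length_le
    · rcases List.mem_singleton.1 hb ▸ hlast with ⟨m, -, hmL, rfl⟩ | hlast
      · simpa using hmL.le
      · exact hlast.length_le
  rw [List.length_flatten, ← List.length_map (f := List.length), ← smul_eq_mul]
  refine List.sum_le_card_nsmul ((init ++ [last]).map List.length) P.L fun x hx => ?_
  obtain ⟨b, hb, rfl⟩ := List.mem_map.1 hx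
  exact hle b hb

lemma IsLegalBlocks.insert {init : List (List ℕ)} {b last : List ℕ}
    (h : P.IsLegalBlocks (init ++ [last])) (hb : P.IsType2Block b) :
    P.IsLegalBlocks (init ++ [b, last]) := by
  obtain ⟨init', last', heq, hinit, hlast⟩ := h
  obtain ⟨rfl, hlast'⟩ := List.append_inj' heq rfl
  obtain rfl := List.singleton_inj.1 hlast'
  refine ⟨init ++ [b], last, by simp, fun x hx => ?_, hlast⟩
  rcases List.mem_append.1 hx with hx | hx
  exacts [hinit x hx, List.mem_singleton.1 hx ▸ hb]

lemma IsLegalBlocks.erase {front : List (List ℕ)} {b last : List ℕ}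
    (h : P.IsLegalBlocks (front ++ [b, last])) :
    P.IsLegalBlocks (front ++ [last]) ∧ P.IsType2Block b := by
  obtain ⟨init, last', heq, hinit, hlast⟩ := h
  have heq' : (front ++ [b]) ++ [last] = init ++ [last'] := by simpa using heq
  obtain ⟨rfl, hlast'⟩ := List.append_inj' heq' rfl
  obtain rfl := List.singleton_inj.1 hlast'
  exact ⟨⟨front, last, rfl, fun x hx => hinit x (by simp [hx]), hlast⟩, hinit b (by simp)⟩

lemma IsLegalBlocks.ne_nil {bs : List (List ℕ)} (h : P.IsLegalBlocks bs) {b : List ℕ}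
    (hb : b ∈ bs) : b ≠ [] := by
  obtain ⟨init, last, rfl, hinit, hlast⟩ := h
  rcases List.mem_append.1 hb with hb | hb
  · exact (hinit b hb).ne_nil
  · rcases List.mem_singleton.1 hb ▸ hlast with ⟨m, hm, -, rfl⟩ | hlast
    · exact List.ne_nil_of_length_pos (by simp; omega)
    · exact hlast.ne_nil

lemma IsLegalBlocks.Z_flatten {front : List (List ℕ)} {b last : List ℕ}
    (h : P.IsLegalBlocks (front ++ [b, last])) : P.Z (front ++ [b, last]).flatten = b.sum := by
  rw [Z, stlBlock, h.blocks_flatten]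
  simp

lemma IsLegalBlocks.removeSTL_flatten {front : List (List ℕ)} {b last : List ℕ}
    (h : P.IsLegalBlocks (front ++ [b, last])) :
    P.removeSTL (front ++ [b, last]).flatten = (front ++ [last]).flatten := by
  rw [removeSTL, h.blocks_flatten]
  simp

lemma IsLegalBlocks.insertSTL_flatten {init : List (List ℕ)} {last : List ℕ}
    (h : P.IsLegalBlocks (init ++ [last])) (t : ℕ) :
    P.insertSTL t (init ++ [last]).flatten = (init ++ [P.type2Block t, last]).flatten := by
  rw [insertSTL, h.blocks_flatten]
  simp

lemma IsLegal.exists_flatten_eq {l : List ℕ} (hl : P.IsLegal l) (hlen : P.L < l.length) :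
    ∃ b₀ init last, P.IsLegalBlocks ((b₀ :: init) ++ [last]) ∧
      ((b₀ :: init) ++ [last]).flatten = l := by
  obtain ⟨bs, hbs, rfl⟩ := hl.exists_isLegalBlocks
  have hlen' := hbs.length_flatten_le
  obtain ⟨_ | ⟨b₀, init⟩, last, rfl, -⟩ := id hbs
  · simp only [List.nil_append, List.length_singleton, one_mul] at hlen hlen'
    omega
  · exact ⟨b₀, init, last, hbs, rfl⟩

lemma IsLegal.exists_flatten_eq_of_two_mul_lt {l : List ℕ} (hl : P.IsLegal l)
    (hlen : 2 * P.L < l.length) :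
    ∃ b₀ front b last, P.IsLegalBlocks ((b₀ :: front) ++ [b, last]) ∧
      ((b₀ :: front) ++ [b, last]).flatten = l := by
  obtain ⟨bs, hbs, rfl⟩ := hl.exists_isLegalBlocks
  have hlen' := hbs.length_flatten_le
  obtain ⟨init, last, rfl, -⟩ := id hbs
  have hinit : 1 < init.length := by
    by_contra! h
    have := Nat.mul_le_mul_right P.L (show (init ++ [last]).length ≤ 2 by
      rw [List.length_append, List.length_singleton]; omega)
    omega
  obtain ⟨b₀, init, rfl⟩ := List.exists_cons_of_length_pos (by omega : 0 < init.length)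
  rcases List.eq_nil_or_concat' init with rfl | ⟨front, b, rfl⟩
  · simp at hinit
  · exact ⟨b₀, front, b, last, by simpa using hbs, by simp⟩

lemma Z_lt_size_of_mem_Omega {n : ℕ} (hn : 2 * P.L < n) {l : List ℕ} (hl : l ∈ P.Omega n) :
    P.Z l < P.size := by
  rw [Omega_eq] at hl
  obtain ⟨⟨hleg, -⟩, rfl⟩ := hl
  obtain ⟨b₀, front, b, last, hbs, rfl⟩ := hleg.exists_flatten_eq_of_two_mul_lt hn
  rw [hbs.Z_flatten]
  exact hbs.erase.2.sum_lt_size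

lemma Lfn_le_of_mem_Omega {n : ℕ} (hn : 2 * P.L < n) {l : List ℕ} (hl : l ∈ P.Omega n) :
    P.Lfn l ≤ P.L := by
  rw [Omega_eq] at hl
  obtain ⟨⟨hleg, -⟩, rfl⟩ := hl
  obtain ⟨b₀, front, b, last, hbs, rfl⟩ := hleg.exists_flatten_eq_of_two_mul_lt hn
  rw [Lfn, hbs.Z_flatten, ← hbs.erase.2.length_eq_ell_sum]
  exact hbs.erase.2.length_le

lemma length_type2Block {t : ℕ} (ht : t < P.size) : (P.type2Block t).length = P.ell t := by
  conv_rhs => rw [← P.sum_type2Block ht]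
  exact (P.isType2Block_type2Block ht).length_eq_ell_sum

lemma ell_le {t : ℕ} (ht : t < P.size) : P.ell t ≤ P.L :=
  length_type2Block ht ▸ (P.isType2Block_type2Block ht).length_le

lemma removeSTL_insertSTL {t : ℕ} (ht : t < P.size) {l : List ℕ} (hl : P.IsLegal l)
    (hlen : P.L < l.length) : P.removeSTL (P.insertSTL t l) = l := by
  obtain ⟨b₀, init, last, hbs, rfl⟩ := hl.exists_flatten_eq hlen
  rw [hbs.insertSTL_flatten, (hbs.insert (P.isType2Block_type2Block ht)).removeSTL_flatten]

lemma bijOn_insertSTL {n t : ℕ} (hn : 2 * P.L < n) (ht : t < P.size) :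
    Set.BijOn (P.insertSTL t) (P.Omega (n - P.ell t)) (P.Omega n ∩ {l | P.Z l = t}) := by
  have hT := P.isType2Block_type2Block ht
  have hell := ell_le ht
  refine ⟨fun l' hl' => ?_, fun l₁ hl₁ l₂ hl₂ heq => ?_, fun l hl => ?_⟩
  · rw [Omega_eq] at hl' ⊢
    obtain ⟨⟨hleg, hhead⟩, hlen⟩ := hl'
    obtain ⟨b₀, init, last, hbs, rfl⟩ := hleg.exists_flatten_eq (by omega)
    have hbs' := hbs.insert hT
    have hb₀ := hbs.ne_nil (List.mem_cons_self ..)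
    rw [hbs.insertSTL_flatten]
    refine ⟨⟨⟨hbs'.isLegal_flatten, ?_⟩, ?_⟩, hbs'.Z_flatten.trans (P.sum_type2Block ht)⟩
    · simpa [List.headI_append_of_ne_nil hb₀] using hhead
    · simp only [List.flatten_append, List.flatten_cons, List.flatten_nil, List.length_append,
        length_type2Block ht] at hlen ⊢
      omega
  · rw [Omega_eq] at hl₁ hl₂
    obtain ⟨⟨hleg₁, -⟩, hlen₁⟩ := hl₁
    obtain ⟨⟨hleg₂, -⟩, hlen₂⟩ := hl₂
    rw [← removeSTL_insertSTL ht hleg₁ (by omega), heq, removeSTL_insertSTL ht hleg₂ (by omega)]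
  · obtain ⟨hl, rfl⟩ := hl
    rw [Omega_eq] at hl
    obtain ⟨⟨hleg, hhead⟩, rfl⟩ := hl
    obtain ⟨b₀, front, b, last, hbs, rfl⟩ := hleg.exists_flatten_eq_of_two_mul_lt hn
    obtain ⟨hbs', hb⟩ := hbs.erase
    have hb₀ := hbs.ne_nil (List.mem_cons_self ..)
    refine ⟨((b₀ :: front) ++ [last]).flatten, ?_, ?_⟩
    · rw [Omega_eq, hbs.Z_flatten, ← hb.length_eq_ell_sum]
      refine ⟨⟨hbs'.isLegal_flatten, ?_⟩, ?_⟩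
      · simpa [List.headI_append_of_ne_nil hb₀] using hhead
      · simp
        omega
    · rw [hbs'.insertSTL_flatten, hbs.Z_flatten, ← hb.eq_type2Block_sum]

lemma sum_insertSTL {t : ℕ} (ht : t < P.size) {l : List ℕ} (hl : P.IsLegal l)
    (hlen : P.L < l.length) : (P.insertSTL t l).sum = l.sum + t := by
  obtain ⟨b₀, init, last, hbs, rfl⟩ := hl.exists_flatten_eq hlen
  rw [hbs.insertSTL_flatten]
  simp [P.sum_type2Block ht]
  omega

lemma finsum_mem_Omega_eq_finsum_insertSTL {n : ℕ} (hn : 2 * P.L < n) (G : List ℕ → ℝ) :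
    ∑ᶠ l ∈ P.Omega n, G l =
      ∑ᶠ t ∈ Set.Iio P.size, ∑ᶠ l' ∈ P.Omega (n - P.ell t), G (P.insertSTL t l') := by
  have hcover : P.Omega n = ⋃ t ∈ Set.Iio P.size, P.Omega n ∩ {l | P.Z l = t} := by
    ext l
    simpa using fun hl => Z_lt_size_of_mem_Omega hn hl
  have hdisj : (Set.Iio P.size).PairwiseDisjoint fun t => P.Omega n ∩ {l | P.Z l = t} :=
    fun t _ t' _ htt' => Set.disjoint_left.2 fun _ h h' => htt' (h.2.symm.trans h'.2)
  rw [hcover, finsum_mem_biUnion hdisj (Set.finite_Iio _)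
    fun _ _ => (P.Omega_finite n).inter_of_left _]
  exact finsum_mem_congr rfl fun t ht =>
    (finsum_mem_eq_of_bijOn _ (bijOn_insertSTL hn ht) fun _ _ => rfl).symm

lemma finsum_mem_Omega_sum_eq_finsum_expectK_add_Z {n : ℕ} (hn : 2 * P.L < n) :
    ∑ᶠ l ∈ P.Omega n, (l.sum : ℝ) = ∑ᶠ l ∈ P.Omega n, (P.expectK (n - P.Lfn l) + P.Z l) := by
  rw [finsum_mem_Omega_eq_finsum_insertSTL hn, finsum_mem_Omega_eq_finsum_insertSTL hn]
  refine finsum_mem_congr rfl fun t ht => ?_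
  have hfin := P.Omega_finite (n - P.ell t)
  have hmaps := (bijOn_insertSTL hn ht).mapsTo
  calc ∑ᶠ l' ∈ P.Omega (n - P.ell t), ((P.insertSTL t l').sum : ℝ)
      = ∑ᶠ l' ∈ P.Omega (n - P.ell t), ((l'.sum : ℝ) + t) := by
        refine finsum_mem_congr rfl fun l' hl' => ?_
        rw [Omega_eq] at hl'
        obtain ⟨⟨hleg, -⟩, hlen⟩ := hl'
        rw [sum_insertSTL ht hleg (by have := ell_le ht; omega), Nat.cast_add]
    _ = ∑ᶠ l' ∈ P.Omega (n - P.ell t), (P.expectK (n - P.ell t) + t) := by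
        rw [finsum_mem_add_distrib hfin, finsum_mem_add_distrib hfin]
        exact congrArg (· + _) (finsum_mem_expectOn hfin _).symm
    _ = ∑ᶠ l' ∈ P.Omega (n - P.ell t),
          (P.expectK (n - P.Lfn (P.insertSTL t l')) + P.Z (P.insertSTL t l')) :=
        finsum_mem_congr rfl fun l' hl' => by rw [Lfn, (hmaps hl').2]

lemma expect_Y_eq_of_expectK_eq {a b : ℝ} {f : ℕ → ℝ}
    (hf : ∀ r : ℕ, P.L < r → P.expectK r = a * r + b + f r) {n : ℕ} (hn : 2 * P.L < n) :
    P.expect n (fun l => (P.Z l : ℝ) + f (n - P.Lfn l) - a * P.Lfn l) =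
      P.expect n (fun _ => f n) := by
  have hfin := P.Omega_finite n
  have hshift : ∀ l ∈ P.Omega n, P.expectK (n - P.Lfn l) + P.Z l =
      a * n + b + ((P.Z l : ℝ) + f (n - P.Lfn l) - a * P.Lfn l) := by
    intro l hl
    have := Lfn_le_of_mem_Omega hn hl
    rw [hf _ (by omega), Nat.cast_sub (by omega)]
    ring
  have hsum : ∑ᶠ _l ∈ P.Omega n, (a * n + b + f n) =
      ∑ᶠ l ∈ P.Omega n, (a * n + b + ((P.Z l : ℝ) + f (n - P.Lfn l) - a * P.Lfn l)) := by
    rw [← hf n (by omega), ← finsum_mem_congr rfl hshift]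
    exact (finsum_mem_expectOn hfin _).trans (finsum_mem_Omega_sum_eq_finsum_expectK_add_Z hn)
  unfold expect expectOn
  congr 1
  simpa only [finsum_mem_add_distrib hfin, add_right_inj] using hsum.symm

lemma abs_Z_sub_mul_Lfn_le {n : ℕ} (hn : 2 * P.L < n) {l : List ℕ} (hl : l ∈ P.Omega n)
    (a : ℝ) :
    |(P.Z l : ℝ) - a * P.Lfn l| ≤ P.size + |a| * P.L := by
  have hZ : (P.Z l : ℝ) ≤ P.size := by exact_mod_cast (Z_lt_size_of_mem_Omega hn hl).le
  have hL : (P.Lfn l : ℝ) ≤ P.L := by exact_mod_cast Lfn_le_of_mem_Omega hn hl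
  grw [abs_sub, abs_mul, Nat.abs_cast, Nat.abs_cast, hZ, hL]

end PLRS

/-- If `E[K_r] = a·r + b + f r` for `r > L` with `f → 0`, then
`Var[Y_n] - E[(Z_n - a·L_n)²] → 0` as `n → ∞`, where
`Y_n ω = Z_n ω + f(n - L_n ω) - a·L_n ω`. -/
theorem var_Y_sub_expect_sq_tendsto (P : PLRS) (a b : ℝ) (f : ℕ → ℝ)
    (hf : ∀ r : ℕ, P.L < r → P.expectK r = a * (r : ℝ) + b + f r)
    (hf0 : Filter.Tendsto f Filter.atTop (nhds 0)) :
    Filter.Tendsto (fun n : ℕ =>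
        varOn (P.Omega n) (fun l => (P.Z l : ℝ) + f (n - P.Lfn l) - a * (P.Lfn l : ℝ)) -
          P.expect n (fun l => ((P.Z l : ℝ) - a * (P.Lfn l : ℝ)) ^ 2))
      Filter.atTop (nhds 0) := by
  set δ : ℕ → ℝ := fun n => ∑ k ∈ Finset.range (P.L + 1), |f (n - k)|
  have hδ : Tendsto δ atTop (nhds 0) := by
    simpa using tendsto_finsetSum (Finset.range (P.L + 1))
      fun k _ => (hf0.comp (tendsto_sub_atTop_nat k)).abs
  have hlarge := eventually_gt_atTop (2 * P.L)
  refine tendsto_varOn_sub_expectOn_sq P.Omega_finite (C := P.size + |a| * P.L) (δ := δ)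
    ?_ ?_ hδ ?_
  · filter_upwards [hlarge] with n hn l hl
    exact abs_Z_sub_mul_Lfn_le hn hl a
  · filter_upwards [hlarge] with n hn l hl
    have hk : P.Lfn l ∈ Finset.range (P.L + 1) :=
      Finset.mem_range_succ_iff.2 (Lfn_le_of_mem_Omega hn hl)
    calc |(P.Z l : ℝ) + f (n - P.Lfn l) - a * P.Lfn l - ((P.Z l : ℝ) - a * P.Lfn l)|
        = |f (n - P.Lfn l)| := by ring_nf
      _ ≤ δ n := Finset.single_le_sum (f := fun k => |f (n - k)|) (fun _ _ => abs_nonneg _) hk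
  · refine squeeze_zero_norm' ?_ (by simpa using hf0.norm)
    filter_upwards [hlarge] with n hn
    rw [Real.norm_eq_abs, ← expect, expect_Y_eq_of_expectK_eq hf hn]
    exact abs_expectOn_le (abs_nonneg _) fun _ _ => le_rfl
end

section
/- Let {H_n} be a Positive Linear Recurrence Sequence with length L and size S. Suppose E[K_r] = a·r + b + f(r) for all r > L with a, b constants and f(r) → 0, and suppose c > 0 satisfies c ≤ a²/(2SL) and Var[K_r] ≥ c·r for all L < r ≤ N, where N > 2L is such that Var[Y_n] > a²/(2S) for all n > N (with Y_n(ω) = Z_n(ω) + f(n − L_n(ω)) − a·L_n(ω)). Then for every n > N, if Var[K_r] ≥ c·r holds for all L < r < n, it follows that Var[K_n] − c·n ≥ Var[Y_n] − c·E[L_n] ≥ Var[Y_n] − c·L ≥ 0, so Var[K_n] ≥ c·n. -/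
open scoped BigOperators
open Filter

open PLRS


namespace PLRSAux

open PLRS

variable (P : PLRS)

lemma one_mem_Icc : (1:ℕ) ∈ Finset.Icc 1 P.L := by
  exact Finset.mem_Icc.mpr ⟨le_refl 1, P.L_pos⟩

lemma size_pos : 0 < P.size := by
  have h := Finset.single_le_sum (f := P.c) (fun i _ => Nat.zero_le _) (one_mem_Icc P)
  exact lt_of_lt_of_le P.c1_pos h

lemma sum_Icc_le {s : ℕ} (hs : s ≤ P.L) : ∑ i ∈ Finset.Icc 1 s, P.c i ≤ P.size :=
  Finset.sum_le_sum_of_subset (Finset.Icc_subset_Icc_right hs)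

lemma value_nil : P.value [] = 0 := by simp [PLRS.value]

lemma value_cons (x : ℕ) (w : List ℕ) :
    P.value (x :: w) = x * P.H (w.length + 1) + P.value w := by
  unfold PLRS.value
  simp only [List.length_cons]
  rw [Finset.sum_range_succ']
  simp only [List.getD_cons_succ, List.getD_cons_zero, Nat.sub_zero, Nat.succ_sub_succ]
  ring

lemma value_map_range_append (g : ℕ → ℕ) (k : ℕ) (w : List ℕ) :
    P.value ((List.range k).map g ++ w) =
      (∑ i ∈ Finset.range k, g i * P.H (k + w.length - i)) + P.value w := by
  induction k generalizing g with
  | zero => simp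
  | succ k ih =>
    rw [List.range_succ_eq_map]
    simp only [List.map_cons, List.map_map, List.cons_append]
    rw [value_cons]
    have hlen : (((List.range k).map (g ∘ (· + 1))) ++ w).length = k + w.length := by
      simp
    rw [hlen, ih (g ∘ (· + 1))]
    rw [Finset.sum_range_succ']
    have h2 : ∀ i, k + 1 + w.length - (i + 1) = k + w.length - i := by omega
    simp only [h2, Function.comp_apply, Nat.sub_zero]
    simp only [show k + 1 + w.length = k + w.length + 1 from by omega]
    ring

lemma sum_Icc_c_H (s m : ℕ) :
    ∑ i ∈ Finset.Icc 1 s, P.c i * P.H (m + 1 - i) =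
      ∑ i ∈ Finset.range s, P.c (i + 1) * P.H (m - i) := by
  induction s with
  | zero => simp
  | succ s ih =>
    rw [Finset.sum_Icc_succ_top (by omega), ih, Finset.sum_range_succ,
      show m + 1 - (s + 1) = m - s from by omega]

end PLRSAux

namespace PLRSAux
open PLRS
variable (P : PLRS)

lemma sum_prefix_le {s m : ℕ} (hs2 : s ≤ P.L) (hsm : s ≤ m) (hm : 1 ≤ m) :
    ∑ i ∈ Finset.Icc 1 s, P.c i * P.H (m + 1 - i) ≤ P.H (m + 1) := by
  rcases le_or_gt P.L m with h | h
  · rw [P.H_rec m h]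
    exact Finset.sum_le_sum_of_subset (Finset.Icc_subset_Icc_right hs2)
  · rw [P.H_init m hm h]
    exact le_trans (Finset.sum_le_sum_of_subset (Finset.Icc_subset_Icc_right hsm))
      (Nat.le_succ _)

lemma legal_ne_nil {l : List ℕ} (h : P.IsLegal l) : l ≠ [] := by
  cases h with
  | cond1 m h1 h2 =>
    simp only [ne_eq, List.map_eq_nil_iff, List.range_eq_nil]
    omega
  | cond2 s hs1 hs2 a ha rest hrest => simp
  | cond2_last s hs1 hs2 a ha => simp

lemma value_block_append_lt {s a : ℕ} (hs1 : 1 ≤ s) (hs2 : s ≤ P.L) (ha : a < P.c s)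
    (rest : List ℕ) (hrest : P.value rest < P.H (rest.length + 1)) :
    P.value (((List.range (s - 1)).map fun i => P.c (i + 1)) ++ a :: rest) <
      P.H ((((List.range (s - 1)).map fun i => P.c (i + 1)) ++ a :: rest).length + 1) := by
  obtain ⟨q, rfl⟩ : ∃ q, s = q + 1 := ⟨s - 1, by omega⟩
  simp only [Nat.add_sub_cancel]
  have hv := value_map_range_append P (fun i => P.c (i + 1)) q (a :: rest)
  rw [value_cons] at hv
  have hlen : (((List.range q).map fun i => P.c (i + 1)) ++ a :: rest).length
      = q + (rest.length + 1) := by simp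
  simp only [List.length_cons] at hv
  rw [hlen, hv]
  set R := rest.length with hR
  have e1 : ∀ i, q + (R + 1) - i = q + 1 + R - i := by omega
  simp only [e1, show q + (R + 1) + 1 = q + 1 + R + 1 from by omega]
  have key : ∑ i ∈ Finset.range (q + 1), P.c (i + 1) * P.H (q + 1 + R - i)
      ≤ P.H (q + 1 + R + 1) := by
    rw [← sum_Icc_c_H]
    exact sum_prefix_le P hs2 (by omega) (by omega)
  rw [Finset.sum_range_succ, show q + 1 + R - q = R + 1 from by omega] at key
  have h1 : a * P.H (R + 1) + P.value rest < (a + 1) * P.H (R + 1) := by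
    rw [Nat.succ_mul]
    exact Nat.add_lt_add_left hrest _
  have h2 : (a + 1) * P.H (R + 1) ≤ P.c (q + 1) * P.H (R + 1) :=
    Nat.mul_le_mul_right _ ha
  omega

theorem value_lt {l : List ℕ} (h : P.IsLegal l) : P.value l < P.H (l.length + 1) := by
  induction h with
  | cond1 m h1 h2 =>
    have hv := value_map_range_append P (fun i => P.c (i + 1)) m []
    simp only [List.append_nil, value_nil, List.length_nil, Nat.add_zero] at hv
    have hlen : ((List.range m).map fun i => P.c (i + 1)).length = m := by simp
    rw [hlen, hv, P.H_init m h1 h2, sum_Icc_c_H]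
    omega
  | cond2 s hs1 hs2 a ha rest hrest ih =>
    exact value_block_append_lt P hs1 hs2 ha rest ih
  | cond2_last s hs1 hs2 a ha =>
    have h0 : P.value ([] : List ℕ) < P.H (([] : List ℕ).length + 1) := by
      simp [value_nil, P.H_one]
    exact value_block_append_lt P hs1 hs2 ha [] h0

theorem H_le_value {l : List ℕ} (hne : l ≠ []) (hh : 0 < l.headI) :
    P.H l.length ≤ P.value l := by
  cases l with
  | nil => simp at hne
  | cons x w =>
    rw [value_cons]
    simp only [List.headI] at hh
    have h1 : P.H (w.length + 1) ≤ x * P.H (w.length + 1) :=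
      Nat.le_mul_of_pos_left _ hh
    simp only [List.length_cons]
    omega

lemma H_lt_H (hH : ∀ m, 1 ≤ m → P.H m < P.H (m + 1)) {m r : ℕ} (hm : 1 ≤ m)
    (hmr : m < r) : P.H m < P.H r := by
  induction r with
  | zero => omega
  | succ r ih =>
    rcases Nat.lt_succ_iff_lt_or_eq.mp hmr with h | h
    · exact lt_trans (ih h) (hH r (by omega))
    · subst h; exact hH m hm

lemma H_le_H (hH : ∀ m, 1 ≤ m → P.H m < P.H (m + 1)) {m r : ℕ} (hm : 1 ≤ m)
    (hmr : m ≤ r) : P.H m ≤ P.H r := by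
  rcases eq_or_lt_of_le hmr with h | h
  · rw [h]
  · exact le_of_lt (H_lt_H P hH hm h)

lemma mem_Omega_iff (hH : ∀ m, 1 ≤ m → P.H m < P.H (m + 1)) {r : ℕ} (hr : 1 ≤ r)
    {l : List ℕ} : l ∈ P.Omega r ↔ P.LegalDecomp l ∧ l.length = r := by
  simp only [PLRS.Omega, Set.mem_setOf_eq]
  constructor
  · rintro ⟨hld, hlo, hhi⟩
    refine ⟨hld, ?_⟩
    have hne := legal_ne_nil P hld.1
    have h1 : 1 ≤ l.length := List.length_pos_iff.mpr hne
    have hlow := H_le_value P hne hld.2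
    have hup := value_lt P hld.1
    by_contra hne2
    rcases lt_or_gt_of_ne hne2 with h | h
    · have := H_le_H P hH (m := l.length + 1) (r := r) (by omega) (by omega)
      omega
    · have := H_le_H P hH (m := r + 1) (r := l.length) (by omega) (by omega)
      omega
  · rintro ⟨hld, hlen⟩
    refine ⟨hld, ?_, ?_⟩
    · rw [← hlen]; exact H_le_value P (legal_ne_nil P hld.1) hld.2
    · rw [← hlen]; exact value_lt P hld.1

end PLRSAux

namespace PLRSAux
open PLRS
variable (P : PLRS)

/-- the prefix `(c 1, …, c q)` -/
def pre (q : ℕ) : List ℕ := (List.range q).map fun i => P.c (i + 1)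

@[simp] lemma pre_length (q : ℕ) : (pre P q).length = q := by simp [pre]

lemma pre_getD {q j : ℕ} (h : j < q) : (pre P q).getD j 0 = P.c (j + 1) := by
  rw [pre, List.getD_eq_getElem _ _ (by simpa using h)]
  simp

lemma find?_range_eq_none {p : ℕ → Bool} {n : ℕ} (h : ∀ j < n, ¬ p j) :
    (List.range n).find? p = none :=
  List.find?_eq_none.mpr (fun x hx => h x (List.mem_range.mp hx))

lemma find?_range_eq_some {p : ℕ → Bool} {n k : ℕ} (hk : k < n) (hpk : p k)
    (hj : ∀ j < k, ¬ p j) : (List.range n).find? p = some k := by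
  have hsplit : List.range n = List.range (k + 1) ++ (List.range (n - (k+1))).map ((k+1) + ·) := by
    rw [← List.range_add]
    congr 1
    omega
  rw [hsplit, List.find?_append, List.range_succ, List.find?_append]
  rw [find?_range_eq_none hj]
  simp [hpk]

lemma firstMismatch_pre_append {q a : ℕ} (ha : a ≠ P.c (q + 1)) (r : List ℕ) :
    P.firstMismatch (pre P q ++ a :: r) = some q := by
  unfold PLRS.firstMismatch
  apply find?_range_eq_some
  · simp only [List.length_append, pre_length, List.length_cons]; omega
  · rw [List.getD_append_right _ _ _ _ (by simp)]
    simp [ha]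
  · intro j hj
    rw [List.getD_append _ _ _ _ (by simpa using hj), pre_getD P hj]
    simp

lemma firstMismatch_pre (m : ℕ) : P.firstMismatch (pre P m) = none := by
  unfold PLRS.firstMismatch
  apply find?_range_eq_none
  intro j hj
  simp only [pre_length] at hj
  rw [pre_getD P hj]
  simp

lemma blocks_nil : P.blocks [] = [] := by
  unfold PLRS.blocks
  simp

lemma blocks_of_mismatch {l : List ℕ} (hne : l ≠ []) {i : ℕ}
    (h : P.firstMismatch l = some i) :
    P.blocks l = l.take (i + 1) :: P.blocks (l.drop (i + 1)) := by
  rw [PLRS.blocks]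
  simp [hne, h]

lemma blocks_of_none {l : List ℕ} (hne : l ≠ []) (h : P.firstMismatch l = none) :
    P.blocks l = [l] := by
  rw [PLRS.blocks]
  simp [hne, h]

lemma pre_ne_nil {m : ℕ} (hm : 1 ≤ m) : pre P m ≠ [] := by
  simp [pre, List.map_eq_nil_iff, List.range_eq_nil]
  omega

lemma blocks_type2_cons {q a : ℕ} (ha : a ≠ P.c (q + 1)) (r : List ℕ) :
    P.blocks ((pre P q ++ [a]) ++ r) = (pre P q ++ [a]) :: P.blocks r := by
  have hsh : (pre P q ++ [a]) ++ r = pre P q ++ a :: r := by simp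
  rw [hsh, blocks_of_mismatch P (by simp) (firstMismatch_pre_append P ha r)]
  congr 1
  · rw [List.take_append]
    simp
  · rw [List.drop_append, List.drop_eq_nil_of_le (by simp)]
    simp

lemma blocks_type1 {m : ℕ} (hm : 1 ≤ m) : P.blocks (pre P m) = [pre P m] :=
  blocks_of_none P (pre_ne_nil P hm) (firstMismatch_pre P m)

/-- shape view of type-2 blocks -/
lemma type2_shape {B : List ℕ} (h : P.IsType2Block B) :
    ∃ q a, q + 1 ≤ P.L ∧ a < P.c (q + 1) ∧ B = pre P q ++ [a] := by
  obtain ⟨s, hs1, hs2, a, ha, hB⟩ := h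
  exact ⟨s - 1, a, by omega, by rwa [show s - 1 + 1 = s from by omega], hB⟩

lemma type2_of_shape {q a : ℕ} (hq : q + 1 ≤ P.L) (ha : a < P.c (q + 1)) :
    P.IsType2Block (pre P q ++ [a]) :=
  ⟨q + 1, by omega, hq, a, ha, by simp [pre]⟩

lemma blocks_flatten (bs' : List (List ℕ)) (B : List ℕ)
    (h2 : ∀ x ∈ bs', P.IsType2Block x) (hB : P.IsType1Block B ∨ P.IsType2Block B) :
    P.blocks (bs' ++ [B]).flatten = bs' ++ [B] := by
  induction bs' with
  | nil =>
    simp only [List.nil_append, List.flatten, List.append_nil, List.append_eq]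
    rcases hB with h1 | h2
    · obtain ⟨m, hm1, hm2, hBeq⟩ := h1
      rw [hBeq]
      exact blocks_type1 P hm1
    · obtain ⟨q, a, hq, ha, hBeq⟩ := type2_shape P h2
      rw [hBeq]
      have := blocks_type2_cons P (Nat.ne_of_lt ha) []
      simpa [blocks_nil P] using this
  | cons B0 tl ih =>
    obtain ⟨q, a, hq, ha, hBeq⟩ := type2_shape P (h2 B0 (by simp))
    have hfl : ((B0 :: tl) ++ [B]).flatten = B0 ++ (tl ++ [B]).flatten := by simp
    rw [hfl, hBeq, blocks_type2_cons P (Nat.ne_of_lt ha), ← hBeq,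
      ih (fun x hx => h2 x (by simp [hx]))]
    simp

lemma legal_of_chain (bs' : List (List ℕ)) (B : List ℕ)
    (h2 : ∀ x ∈ bs', P.IsType2Block x) (hB : P.IsType1Block B ∨ P.IsType2Block B) :
    P.IsLegal (bs' ++ [B]).flatten := by
  induction bs' with
  | nil =>
    simp only [List.nil_append, List.flatten, List.append_nil, List.append_eq]
    rcases hB with h1 | h2
    · obtain ⟨m, hm1, hm2, hBeq⟩ := h1
      rw [hBeq]
      exact IsLegal.cond1 m hm1 hm2
    · obtain ⟨s, hs1, hs2, a, ha, hBeq⟩ := h2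
      rw [hBeq]
      exact IsLegal.cond2_last s hs1 hs2 a ha
  | cons B0 tl ih =>
    obtain ⟨s, hs1, hs2, a, ha, hBeq⟩ := h2 B0 (by simp)
    have hfl : ((B0 :: tl) ++ [B]).flatten
        = ((List.range (s - 1)).map fun i => P.c (i + 1)) ++ a :: (tl ++ [B]).flatten := by
      simp [hBeq]
    rw [hfl]
    exact IsLegal.cond2 s hs1 hs2 a ha _ (ih (fun x hx => h2 x (by simp [hx])))

lemma legal_to_chain {l : List ℕ} (h : P.IsLegal l) :
    ∃ bs' B, l = (bs' ++ [B]).flatten ∧ (∀ x ∈ bs', P.IsType2Block x) ∧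
      (P.IsType1Block B ∨ P.IsType2Block B) := by
  induction h with
  | cond1 m h1 h2 =>
    exact ⟨[], _, by simp, by simp, Or.inl ⟨m, h1, h2, rfl⟩⟩
  | cond2 s hs1 hs2 a ha rest hrest ih =>
    obtain ⟨bs', B, heq, hall, hB⟩ := ih
    refine ⟨(((List.range (s - 1)).map fun i => P.c (i + 1)) ++ [a]) :: bs', B, ?_, ?_, hB⟩
    · simp [← heq]
    · intro x hx
      rcases List.mem_cons.mp hx with h | h
      · exact h ▸ ⟨s, hs1, hs2, a, ha, rfl⟩
      · exact hall x h
  | cond2_last s hs1 hs2 a ha =>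
    exact ⟨[], _, by simp, by simp, Or.inr ⟨s, hs1, hs2, a, ha, rfl⟩⟩

end PLRSAux

namespace PLRSAux
open PLRS
variable (P : PLRS)

lemma pre_sum (q : ℕ) : (pre P q).sum = ∑ i ∈ Finset.Icc 1 q, P.c i := by
  induction q with
  | zero => simp [pre]
  | succ q ih =>
    have : pre P (q + 1) = pre P q ++ [P.c (q + 1)] := by
      simp [pre, List.range_succ]
    rw [this, List.sum_append, ih, Finset.sum_Icc_succ_top (by omega)]
    simp

lemma sum_Icc_c_mono {u v : ℕ} (h : u ≤ v) :
    ∑ i ∈ Finset.Icc 1 u, P.c i ≤ ∑ i ∈ Finset.Icc 1 v, P.c i :=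
  Finset.sum_le_sum_of_subset (Finset.Icc_subset_Icc_right h)

lemma ell_eq {s t : ℕ} (hs1 : 1 ≤ s) (hlo : ∑ i ∈ Finset.Icc 1 (s - 1), P.c i ≤ t)
    (hhi : t < ∑ i ∈ Finset.Icc 1 s, P.c i) : P.ell t = s := by
  have hne : {u : ℕ | t < ∑ i ∈ Finset.Icc 1 u, P.c i}.Nonempty := ⟨s, hhi⟩
  have hmem := Nat.sInf_mem hne
  have hle : P.ell t ≤ s := Nat.sInf_le hhi
  rcases eq_or_lt_of_le hle with h | h
  · exact h
  · exfalso
    have h1 : P.ell t ≤ s - 1 := by omega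
    have h2 : ∑ i ∈ Finset.Icc 1 (P.ell t), P.c i ≤ ∑ i ∈ Finset.Icc 1 (s - 1), P.c i :=
      sum_Icc_c_mono P h1
    have h3 : t < ∑ i ∈ Finset.Icc 1 (P.ell t), P.c i := hmem
    omega

lemma size_mem_ell_set {t : ℕ} (ht : t < P.size) :
    t < ∑ i ∈ Finset.Icc 1 P.L, P.c i := ht

lemma ell_le_L {t : ℕ} (ht : t < P.size) : P.ell t ≤ P.L :=
  Nat.sInf_le (size_mem_ell_set P ht)

lemma ell_spec_hi {t : ℕ} (ht : t < P.size) :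
    t < ∑ i ∈ Finset.Icc 1 (P.ell t), P.c i :=
  Nat.sInf_mem (⟨P.L, size_mem_ell_set P ht⟩ :
    {u : ℕ | t < ∑ i ∈ Finset.Icc 1 u, P.c i}.Nonempty)

lemma ell_pos {t : ℕ} (ht : t < P.size) : 1 ≤ P.ell t := by
  by_contra h
  have h0 : P.ell t = 0 := by omega
  have h1 := ell_spec_hi P ht
  rw [h0] at h1
  simp at h1

lemma ell_spec_lo {t : ℕ} (ht : t < P.size) :
    ∑ i ∈ Finset.Icc 1 (P.ell t - 1), P.c i ≤ t := by
  by_contra h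
  push_neg at h
  have h1 : P.ell t ≤ P.ell t - 1 := Nat.sInf_le h
  have h2 := ell_pos P ht
  omega

lemma t2_sum (q a : ℕ) : (pre P q ++ [a]).sum = (∑ i ∈ Finset.Icc 1 q, P.c i) + a := by
  rw [List.sum_append, pre_sum]
  simp

lemma t2_sum_lt_size {q a : ℕ} (hq : q + 1 ≤ P.L) (ha : a < P.c (q + 1)) :
    (pre P q ++ [a]).sum < P.size := by
  rw [t2_sum]
  have h1 : (∑ i ∈ Finset.Icc 1 q, P.c i) + a < ∑ i ∈ Finset.Icc 1 (q + 1), P.c i := by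
    rw [Finset.sum_Icc_succ_top (by omega)]
    omega
  have h2 := sum_Icc_c_mono P hq
  have hsz : P.size = ∑ i ∈ Finset.Icc 1 P.L, P.c i := rfl
  omega

lemma t2_ell {q a : ℕ} (hq : q + 1 ≤ P.L) (ha : a < P.c (q + 1)) :
    P.ell ((pre P q ++ [a]).sum) = q + 1 := by
  apply ell_eq P (by omega)
  · rw [t2_sum]
    simp
  · rw [t2_sum, Finset.sum_Icc_succ_top (by omega)]
    omega

lemma t2_type2Block {q a : ℕ} (hq : q + 1 ≤ P.L) (ha : a < P.c (q + 1)) :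
    P.type2Block ((pre P q ++ [a]).sum) = pre P q ++ [a] := by
  unfold PLRS.type2Block
  rw [t2_ell P hq ha]
  simp only [Nat.add_sub_cancel]
  rw [t2_sum]
  simp [pre]

lemma type2Block_shape {t : ℕ} (ht : t < P.size) :
    ∃ q a, q + 1 ≤ P.L ∧ a < P.c (q + 1) ∧ P.type2Block t = pre P q ++ [a] ∧
      (P.type2Block t).sum = t ∧ (P.type2Block t).length = P.ell t := by
  have hs1 := ell_pos P ht
  have hsL := ell_le_L P ht
  have hlo := ell_spec_lo P ht
  have hhi := ell_spec_hi P ht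
  obtain ⟨q, hqe⟩ : ∃ q, P.ell t = q + 1 := ⟨P.ell t - 1, by omega⟩
  have hq1 : P.ell t - 1 = q := by omega
  rw [hq1] at hlo
  refine ⟨q, t - ∑ i ∈ Finset.Icc 1 q, P.c i, by omega, ?_, ?_, ?_, ?_⟩
  · rw [hqe, Finset.sum_Icc_succ_top (by omega)] at hhi
    omega
  · unfold PLRS.type2Block
    rw [hq1]
    rfl
  · unfold PLRS.type2Block
    rw [hq1, List.sum_append]
    have hps := pre_sum P q
    simp only [pre] at hps
    rw [hps]
    simp
    omega
  · unfold PLRS.type2Block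
    rw [hq1, hqe]
    simp

end PLRSAux

namespace PLRSAux
open PLRS
variable (P : PLRS)

lemma type2_ne_nil {B : List ℕ} (h : P.IsType2Block B) : B ≠ [] := by
  obtain ⟨q, a, hq, ha, hBeq⟩ := type2_shape P h
  simp [hBeq]

lemma type2_len_le {B : List ℕ} (h : P.IsType2Block B) : B.length ≤ P.L := by
  obtain ⟨q, a, hq, ha, hBeq⟩ := type2_shape P h
  simp [hBeq]
  omega

lemma block_len_le {B : List ℕ} (h : P.IsType1Block B ∨ P.IsType2Block B) :
    B.length ≤ P.L := by
  rcases h with h | h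
  · obtain ⟨m, hm1, hm2, hBeq⟩ := h
    simp [hBeq]
    omega
  · exact type2_len_le P h

lemma chain_flatten_length (bs : List (List ℕ)) (h : ∀ x ∈ bs, x.length ≤ P.L) :
    bs.flatten.length ≤ bs.length * P.L := by
  induction bs with
  | nil => simp
  | cons B tl ih =>
    simp only [List.flatten_cons, List.length_append, List.length_cons]
    have h1 := h B (by simp)
    have h2 := ih (fun x hx => h x (by simp [hx]))
    have : (tl.length + 1) * P.L = tl.length * P.L + P.L := by ring
    omega

lemma headI_flatten_cons {x : List ℕ} (hx : x ≠ []) (t : List (List ℕ)) :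
    ((x :: t).flatten).headI = x.headI := by
  cases x with
  | nil => simp at hx
  | cons y w => simp

lemma omega_struct (hH : ∀ m, 1 ≤ m → P.H m < P.H (m + 1)) {n : ℕ} (hn : 2 * P.L < n)
    {l : List ℕ} (hl : l ∈ P.Omega n) :
    ∃ front Bst Blast, l = (front ++ [Bst, Blast]).flatten ∧ front ≠ [] ∧
      (∀ x ∈ front, P.IsType2Block x) ∧ P.IsType2Block Bst ∧
      (P.IsType1Block Blast ∨ P.IsType2Block Blast) := by
  have hL := P.L_pos
  have hmem := (mem_Omega_iff P hH (r := n) (by omega)).mp hl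
  obtain ⟨⟨hleg, hhead⟩, hlen⟩ := hmem
  obtain ⟨bs', B, heq, hall, hB⟩ := legal_to_chain P hleg
  have hblen : ∀ x ∈ bs' ++ [B], x.length ≤ P.L := by
    intro x hx
    rcases List.mem_append.mp hx with h | h
    · exact type2_len_le P (hall x h)
    · simp at h
      exact h ▸ block_len_le P hB
  have hfl := chain_flatten_length P (bs' ++ [B]) hblen
  rw [← heq, hlen] at hfl
  have h2 : 2 ≤ bs'.length := by
    by_contra h
    push_neg at h
    have : (bs' ++ [B]).length ≤ 2 := by simp; omega
    nlinarith [P.L_pos]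
  obtain ⟨front, Bst, hbs⟩ : ∃ front Bst, bs' = front ++ [Bst] := by
    rcases List.eq_nil_or_concat bs' with h | ⟨front, Bst, h⟩
    · rw [h] at h2; simp at h2
    · exact ⟨front, Bst, by simpa using h⟩
  refine ⟨front, Bst, B, ?_, ?_, ?_, ?_, hB⟩
  · rw [heq, hbs]; simp
  · intro h
    rw [hbs, h] at h2; simp at h2
  · intro x hx
    exact hall x (by rw [hbs]; simp [hx])
  · exact hall Bst (by rw [hbs]; simp)

lemma struct_data {front : List (List ℕ)} {Bst Blast : List ℕ} (hfront : front ≠ [])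
    (h2 : ∀ x ∈ front, P.IsType2Block x) (hBst : P.IsType2Block Bst)
    (hB : P.IsType1Block Blast ∨ P.IsType2Block Blast) :
    P.blocks ((front ++ [Bst, Blast]).flatten) = front ++ [Bst, Blast] ∧
    P.stlBlock ((front ++ [Bst, Blast]).flatten) = Bst ∧
    P.Z ((front ++ [Bst, Blast]).flatten) = Bst.sum ∧
    P.removeSTL ((front ++ [Bst, Blast]).flatten) = (front ++ [Blast]).flatten := by
  have hbl : P.blocks ((front ++ [Bst, Blast]).flatten) = front ++ [Bst, Blast] := by
    have hch : ∀ x ∈ front ++ [Bst], P.IsType2Block x := by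
      intro x hx
      rcases List.mem_append.mp hx with h | h
      · exact h2 x h
      · simp at h; exact h ▸ hBst
    have := blocks_flatten P (front ++ [Bst]) Blast hch hB
    simpa using this
  refine ⟨hbl, ?_, ?_, ?_⟩
  · rw [PLRS.stlBlock, hbl]
    simp
  · rw [PLRS.Z, PLRS.stlBlock, hbl]
    simp
  · rw [PLRS.removeSTL, hbl]
    simp

lemma forward (hH : ∀ m, 1 ≤ m → P.H m < P.H (m + 1)) {n : ℕ} (hn : 2 * P.L < n)
    {l : List ℕ} (hl : l ∈ P.Omega n) :
    P.Z l < P.size ∧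
    P.removeSTL l ∈ P.Omega (n - P.ell (P.Z l)) ∧
    (P.removeSTL l).sum + P.Z l = l.sum ∧
    P.insertSTL (P.Z l) (P.removeSTL l) = l := by
  have hL := P.L_pos
  obtain ⟨front, Bst, Blast, heq, hfront, h2, hBst, hB⟩ := omega_struct P hH hn hl
  obtain ⟨hbl, hstl, hZ, hrem⟩ := struct_data P hfront h2 hBst hB
  rw [← heq] at hbl hstl hZ hrem
  obtain ⟨q, a, hq, ha, hBeq⟩ := type2_shape P hBst
  have hZv : P.Z l = Bst.sum := hZ
  have htlt : P.Z l < P.size := by rw [hZv, hBeq]; exact t2_sum_lt_size P hq ha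
  have hell : P.ell (P.Z l) = q + 1 := by rw [hZv, hBeq]; exact t2_ell P hq ha
  have hmem := (mem_Omega_iff P hH (r := n) (by omega)).mp hl
  obtain ⟨⟨hleg, hhead⟩, hlen⟩ := hmem
  -- lengths
  have hlen' : l.length = front.flatten.length + (Bst.length + Blast.length) := by
    rw [heq]; simp
  have hBstlen : Bst.length = q + 1 := by rw [hBeq]; simp
  -- head of front
  obtain ⟨F0, ft, rfl⟩ : ∃ F0 ft, front = F0 :: ft := by
    cases front with
    | nil => exact absurd rfl hfront
    | cons F0 ft => exact ⟨F0, ft, rfl⟩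
  have hF0 : F0 ≠ [] := type2_ne_nil P (h2 F0 (by simp))
  have hheadl : l.headI = F0.headI := by
    rw [heq]
    simp only [List.cons_append]
    exact headI_flatten_cons hF0 _
  -- removeSTL is legal decomposition of right length
  have hch : ∀ x ∈ (F0 :: ft), P.IsType2Block x := h2
  have hleg' : P.IsLegal (P.removeSTL l) := by
    rw [hrem]
    exact legal_of_chain P (F0 :: ft) Blast hch hB
  have hhead' : 0 < (P.removeSTL l).headI := by
    rw [hrem]
    simp only [List.cons_append]
    rw [headI_flatten_cons hF0]
    rw [hheadl] at hhead
    exact hhead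
  have hlenrem : (P.removeSTL l).length = n - (q + 1) := by
    rw [hrem]
    have : ((F0 :: ft) ++ [Blast]).flatten.length
        = (F0 :: ft).flatten.length + Blast.length := by simp; omega
    rw [this]
    rw [hlen, hBstlen] at hlen'
    omega
  have hmemrem : P.removeSTL l ∈ P.Omega (n - P.ell (P.Z l)) := by
    rw [hell]
    exact (mem_Omega_iff P hH (r := n - (q + 1)) (by omega)).mpr
      ⟨⟨hleg', hhead'⟩, hlenrem⟩
  have hsum : (P.removeSTL l).sum + P.Z l = l.sum := by
    rw [hrem, hZv, heq]
    simp [List.sum_flatten]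
    ring
  refine ⟨htlt, hmemrem, hsum, ?_⟩
  -- insertSTL inverts
  have hblrem : P.blocks (P.removeSTL l) = (F0 :: ft) ++ [Blast] := by
    rw [hrem]
    exact blocks_flatten P (F0 :: ft) Blast hch hB
  rw [PLRS.insertSTL, hblrem]
  have hX : P.type2Block (P.Z l) = Bst := by
    rw [hZv, hBeq]
    exact t2_type2Block P hq ha
  rw [hX]
  simp [heq]

lemma backward (hH : ∀ m, 1 ≤ m → P.H m < P.H (m + 1)) {n : ℕ} (hn : 2 * P.L < n)
    {t : ℕ} (ht : t < P.size) (hnl : P.L < n - P.ell t)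
    {l' : List ℕ} (hl' : l' ∈ P.Omega (n - P.ell t)) :
    P.insertSTL t l' ∈ P.Omega n ∧ P.Z (P.insertSTL t l') = t ∧
    P.removeSTL (P.insertSTL t l') = l' ∧ (P.insertSTL t l').sum = l'.sum + t := by
  have hL := P.L_pos
  have hellL := ell_le_L P ht
  have hellpos := ell_pos P ht
  obtain ⟨q, a, hq, ha, hXeq, hXsum, hXlen⟩ := type2Block_shape P ht
  have hmem := (mem_Omega_iff P hH (r := n - P.ell t) (by omega)).mp hl'
  obtain ⟨⟨hleg, hhead⟩, hlen⟩ := hmem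
  obtain ⟨bs', B, heq, hall, hB⟩ := legal_to_chain P hleg
  have hbs' : bs' ≠ [] := by
    intro h
    rw [h] at heq
    simp at heq
    have : l'.length ≤ P.L := heq ▸ block_len_le P hB
    omega
  obtain ⟨F0, ft, rfl⟩ : ∃ F0 ft, bs' = F0 :: ft := by
    cases bs' with
    | nil => exact absurd rfl hbs'
    | cons F0 ft => exact ⟨F0, ft, rfl⟩
  have hF0 : F0 ≠ [] := type2_ne_nil P (hall F0 (by simp))
  have hbll' : P.blocks l' = (F0 :: ft) ++ [B] := by
    rw [heq]
    exact blocks_flatten P _ _ hall hB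
  have hXt2 : P.IsType2Block (P.type2Block t) := by
    rw [hXeq]; exact type2_of_shape P hq ha
  have hins : P.insertSTL t l' = ((F0 :: ft) ++ [P.type2Block t, B]).flatten := by
    rw [PLRS.insertSTL, hbll']
    simp
  obtain ⟨hbl2, hstl2, hZ2, hrem2⟩ := struct_data P (front := F0 :: ft)
    (by simp) hall hXt2 hB
  have hheadl' : l'.headI = F0.headI := by
    rw [heq]
    simp only [List.cons_append]
    exact headI_flatten_cons hF0 _
  have hmemins : P.insertSTL t l' ∈ P.Omega n := by
    rw [hins]
    apply (mem_Omega_iff P hH (r := n) (by omega)).mpr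
    refine ⟨⟨?_, ?_⟩, ?_⟩
    · have hch : ∀ x ∈ (F0 :: ft) ++ [P.type2Block t], P.IsType2Block x := by
        intro x hx
        rcases List.mem_append.mp hx with h | h
        · exact hall x h
        · simp at h; exact h ▸ hXt2
      have := legal_of_chain P ((F0 :: ft) ++ [P.type2Block t]) B hch hB
      simpa using this
    · simp only [List.cons_append]
      rw [headI_flatten_cons hF0]
      rw [hheadl'] at hhead
      exact hhead
    · have h1 : ((F0 :: ft) ++ [P.type2Block t, B]).flatten.length
          = (F0 :: ft).flatten.length + (P.ell t + B.length) := by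
        simp [hXlen]
        omega
      have h2 : l'.length = (F0 :: ft).flatten.length + B.length := by
        rw [heq]; simp; omega
      rw [h1]
      rw [hlen] at h2
      omega
  refine ⟨hmemins, ?_, ?_, ?_⟩
  · rw [hins, hZ2, hXsum]
  · rw [hins, hrem2, heq]
  · rw [hins]
    simp [List.sum_flatten, heq, hXsum]
    ring
end PLRSAux

namespace PLRSAux
open PLRS
variable (P : PLRS)

lemma H_incr (hd : 2 ≤ P.L ∨ 2 ≤ P.c 1) : ∀ m, 1 ≤ m → P.H m < P.H (m + 1) := by
  intro m hm
  have hHm := P.H_pos m hm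
  rcases lt_or_ge m P.L with h | h
  · rw [P.H_init m hm h]
    have h1 : P.c 1 * P.H (m + 1 - 1) ≤ ∑ i ∈ Finset.Icc 1 m, P.c i * P.H (m + 1 - i) :=
      Finset.single_le_sum (f := fun i => P.c i * P.H (m + 1 - i))
        (fun i _ => Nat.zero_le _) (by simp [Finset.mem_Icc]; omega)
    have h2 : P.H m ≤ P.c 1 * P.H (m + 1 - 1) := by
      simp only [Nat.add_sub_cancel]
      exact Nat.le_mul_of_pos_left _ P.c1_pos
    omega
  · rw [P.H_rec m h]
    rcases hd with hd | hd
    · have hmem1 : (1 : ℕ) ∈ (Finset.Icc 1 P.L).erase P.L := by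
        simp [Finset.mem_erase, Finset.mem_Icc]
        omega
      have h1 : P.c 1 * P.H (m + 1 - 1) ≤
          ∑ i ∈ (Finset.Icc 1 P.L).erase P.L, P.c i * P.H (m + 1 - i) :=
        Finset.single_le_sum (f := fun i => P.c i * P.H (m + 1 - i))
          (fun i _ => Nat.zero_le _) hmem1
      have h2 : ∑ i ∈ (Finset.Icc 1 P.L).erase P.L, P.c i * P.H (m + 1 - i)
          + P.c P.L * P.H (m + 1 - P.L) = ∑ i ∈ Finset.Icc 1 P.L, P.c i * P.H (m + 1 - i) :=
        Finset.sum_erase_add _ _ (by simp [Finset.mem_Icc]; exact P.L_pos)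
      have h3 : P.H m ≤ P.c 1 * P.H (m + 1 - 1) := by
        simp only [Nat.add_sub_cancel]
        exact Nat.le_mul_of_pos_left _ P.c1_pos
      have h4 : 1 ≤ P.c P.L * P.H (m + 1 - P.L) :=
        Nat.one_le_iff_ne_zero.mpr (Nat.mul_ne_zero (by have := P.cL_pos; omega)
          (by have := P.H_pos (m + 1 - P.L) (by omega); omega))
      omega
    · have h1 : P.c 1 * P.H (m + 1 - 1) ≤ ∑ i ∈ Finset.Icc 1 P.L, P.c i * P.H (m + 1 - i) :=
        Finset.single_le_sum (f := fun i => P.c i * P.H (m + 1 - i))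
          (fun i _ => Nat.zero_le _) (one_mem_Icc P)
      have h2 : 2 * P.H m ≤ P.c 1 * P.H (m + 1 - 1) := by
        simp only [Nat.add_sub_cancel]
        exact Nat.mul_le_mul_right _ hd
      omega

lemma H_const_of_degenerate (hL : P.L = 1) (hc : P.c 1 = 1) :
    ∀ m, 1 ≤ m → P.H m = 1 := by
  intro m hm
  induction m with
  | zero => omega
  | succ m ih =>
    rcases Nat.eq_or_lt_of_le hm with h | h
    · rw [← h]; exact P.H_one
    · have hm1 : 1 ≤ m := by omega
      have := P.H_rec m (by omega)
      rw [this, hL]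
      simp [ih hm1, hc]

lemma legal_entry_le {l : List ℕ} (h : P.IsLegal l) : ∀ x ∈ l, x ≤ P.size := by
  have hc : ∀ i, 1 ≤ i → i ≤ P.L → P.c i ≤ P.size := by
    intro i h1 h2
    exact Finset.single_le_sum (f := P.c) (fun j _ => Nat.zero_le _)
      (by simp [Finset.mem_Icc]; omega)
  induction h with
  | cond1 m h1 h2 =>
    intro x hx
    simp only [List.mem_map, List.mem_range] at hx
    obtain ⟨i, hi, rfl⟩ := hx
    exact hc (i + 1) (by omega) (by omega)
  | cond2 s hs1 hs2 a ha rest hrest ih =>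
    intro x hx
    simp only [List.mem_append, List.mem_map, List.mem_range, List.mem_cons] at hx
    rcases hx with ⟨i, hi, rfl⟩ | h | h
    · exact hc (i + 1) (by omega) (by omega)
    · subst h; exact le_trans (le_of_lt ha) (hc s hs1 hs2)
    · exact ih x h
  | cond2_last s hs1 hs2 a ha =>
    intro x hx
    simp only [List.mem_append, List.mem_map, List.mem_range, List.mem_cons] at hx
    rcases hx with ⟨i, hi, rfl⟩ | h | h
    · exact hc (i + 1) (by omega) (by omega)
    · subst h; exact le_trans (le_of_lt ha) (hc s hs1 hs2)
    · simp at h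
 
lemma omega_finite (hH : ∀ m, 1 ≤ m → P.H m < P.H (m + 1)) {r : ℕ} (hr : 1 ≤ r) :
    (P.Omega r).Finite := by
  apply Set.Finite.subset (Set.Finite.image
    (fun l : List (Fin (P.size + 1)) => l.map Fin.val)
    (List.finite_length_le (Fin (P.size + 1)) r))
  intro l hl
  have hmem := (mem_Omega_iff P hH hr).mp hl
  obtain ⟨⟨hleg, hhead⟩, hlen⟩ := hmem
  have hent := legal_entry_le P hleg
  refine ⟨l.map (fun x => (⟨x % (P.size + 1), Nat.mod_lt _ (by omega)⟩ : Fin (P.size + 1))),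
    by simp [hlen], ?_⟩
  simp only [List.map_map]
  have : ∀ x ∈ l, x % (P.size + 1) = x := fun x hx => Nat.mod_eq_of_lt (by
    have := hent x hx; omega)
  calc l.map (Fin.val ∘ fun x => (⟨x % (P.size + 1), Nat.mod_lt _ (by omega)⟩ : Fin (P.size + 1)))
      = l.map id := List.map_congr_left (fun x hx => by simp [this x hx])
    _ = l := List.map_id l

end PLRSAux

namespace PLRSAux
open PLRS
variable (P : PLRS)

lemma expectOn_coe (s : Finset (List ℕ)) (g : List ℕ → ℝ) :
    expectOn ↑s g = (∑ l ∈ s, g l) / (s.card : ℝ) := by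
  rw [expectOn, finsum_mem_coe_finset, Set.ncard_coe_finset]

lemma varOn_coe (s : Finset (List ℕ)) (g : List ℕ → ℝ) :
    varOn ↑s g = (∑ l ∈ s, g l ^ 2) / (s.card : ℝ)
      - ((∑ l ∈ s, g l) / (s.card : ℝ)) ^ 2 := by
  rw [varOn, expectOn_coe, expectOn_coe]

lemma varOn_empty (g : List ℕ → ℝ) : varOn ∅ g = 0 := by
  have h : (∅ : Set (List ℕ)) = ↑(∅ : Finset (List ℕ)) := by simp
  rw [h, varOn_coe]
  simp

lemma expectOn_congr (s : Finset (List ℕ)) {g h : List ℕ → ℝ}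
    (he : ∀ x ∈ s, g x = h x) : expectOn ↑s g = expectOn ↑s h := by
  rw [expectOn_coe, expectOn_coe, Finset.sum_congr rfl he]

lemma varOn_congr (s : Finset (List ℕ)) {g h : List ℕ → ℝ}
    (he : ∀ x ∈ s, g x = h x) : varOn ↑s g = varOn ↑s h := by
  rw [varOn_coe, varOn_coe, Finset.sum_congr rfl he,
    Finset.sum_congr rfl (fun x hx => by rw [he x hx])]

lemma varOn_sub_const (s : Finset (List ℕ)) (hs : 0 < s.card) (g : List ℕ → ℝ)
    (d : ℝ) : varOn ↑s (fun x => g x - d) = varOn ↑s g := by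
  have hM : ((s.card : ℝ)) ≠ 0 := by positivity
  rw [varOn_coe, varOn_coe]
  have h1 : ∑ x ∈ s, (g x - d) ^ 2
      = ∑ x ∈ s, g x ^ 2 - 2 * d * ∑ x ∈ s, g x + s.card * d ^ 2 := by
    have : ∀ x ∈ s, (g x - d) ^ 2 = g x ^ 2 - 2 * d * g x + d ^ 2 := fun x _ => by ring
    rw [Finset.sum_congr rfl this, Finset.sum_add_distrib, Finset.sum_sub_distrib,
      ← Finset.mul_sum, Finset.sum_const, nsmul_eq_mul]
  have h2 : ∑ x ∈ s, (g x - d) = ∑ x ∈ s, g x - s.card * d := by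
    rw [Finset.sum_sub_distrib, Finset.sum_const, nsmul_eq_mul]
  rw [h1, h2]
  field_simp
  ring

lemma fiber_trans (hH : ∀ m, 1 ≤ m → P.H m < P.H (m + 1)) {n : ℕ} (hn : 2 * P.L < n)
    {t : ℕ} (ht : t < P.size) (hnl : P.L < n - P.ell t)
    (A D : Finset (List ℕ)) (hA : ↑A = P.Omega n) (hD : ↑D = P.Omega (n - P.ell t))
    (g : List ℕ → ℝ) :
    ∑ x ∈ A.filter (fun x => P.Z x = t), g x = ∑ y ∈ D, g (P.insertSTL t y) := by
  have hmemA : ∀ x, x ∈ A ↔ x ∈ P.Omega n := fun x => by rw [← Finset.mem_coe, hA]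
  have hmemD : ∀ y, y ∈ D ↔ y ∈ P.Omega (n - P.ell t) := fun y => by
    rw [← Finset.mem_coe, hD]
  apply Finset.sum_nbij' (i := P.removeSTL) (j := P.insertSTL t)
  · intro x hx
    obtain ⟨hxA, hZ⟩ := Finset.mem_filter.mp hx
    have hfw := forward P hH hn ((hmemA x).mp hxA)
    exact (hmemD _).mpr (by rw [← hZ]; exact hfw.2.1)
  · intro y hy
    have hbw := backward P hH hn ht hnl ((hmemD y).mp hy)
    exact Finset.mem_filter.mpr ⟨(hmemA _).mpr hbw.1, hbw.2.1⟩
  · intro x hx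
    obtain ⟨hxA, hZ⟩ := Finset.mem_filter.mp hx
    have hfw := forward P hH hn ((hmemA x).mp hxA)
    rw [← hZ]
    exact hfw.2.2.2
  · intro y hy
    have hbw := backward P hH hn ht hnl ((hmemD y).mp hy)
    exact hbw.2.2.1
  · intro x hx
    obtain ⟨hxA, hZ⟩ := Finset.mem_filter.mp hx
    have hfw := forward P hH hn ((hmemA x).mp hxA)
    rw [← hZ, hfw.2.2.2]

end PLRSAux

open PLRSAux

set_option maxHeartbeats 1000000

/-- The inductive step: with `E[K_r] = a·r + b + f r` for `r > L`, `f → 0`,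
`0 < c ≤ a²/(2SL)`, `Var[K_r] ≥ c·r` for `L < r ≤ N`, and `N > 2L` such that
`Var[Y_n] > a²/(2S)` for `n > N`, then for `n > N`, assuming `Var[K_r] ≥ c·r` for all
`L < r < n`, we get `Var[K_n] - c·n ≥ Var[Y_n] - c·E[L_n] ≥ Var[Y_n] - c·L ≥ 0`, so
`Var[K_n] ≥ c·n`. -/
theorem inductive_step (P : PLRS) (a b : ℝ) (f : ℕ → ℝ)
    (hf : ∀ r : ℕ, P.L < r → P.expectK r = a * (r : ℝ) + b + f r)
    (hf0 : Filter.Tendsto f Filter.atTop (nhds 0))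
    (c : ℝ) (hc : 0 < c) (hcle : c ≤ a ^ 2 / (2 * (P.size : ℝ) * (P.L : ℝ)))
    (N : ℕ) (hN : 2 * P.L < N)
    (hNvar : ∀ n : ℕ, N < n →
      a ^ 2 / (2 * (P.size : ℝ)) <
        varOn (P.Omega n) (fun l => (P.Z l : ℝ) + f (n - P.Lfn l) - a * (P.Lfn l : ℝ)))
    (hbase : ∀ r : ℕ, P.L < r → r ≤ N → c * (r : ℝ) ≤ P.varK r)
    (n : ℕ) (hn : N < n)
    (hind : ∀ r : ℕ, P.L < r → r < n → c * (r : ℝ) ≤ P.varK r) :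
    (varOn (P.Omega n) (fun l => (P.Z l : ℝ) + f (n - P.Lfn l) - a * (P.Lfn l : ℝ)) -
        c * P.expect n (fun l => (P.Lfn l : ℝ)) ≤ P.varK n - c * (n : ℝ)) ∧
    (varOn (P.Omega n) (fun l => (P.Z l : ℝ) + f (n - P.Lfn l) - a * (P.Lfn l : ℝ)) -
        c * (P.L : ℝ) ≤
      varOn (P.Omega n) (fun l => (P.Z l : ℝ) + f (n - P.Lfn l) - a * (P.Lfn l : ℝ)) -
        c * P.expect n (fun l => (P.Lfn l : ℝ))) ∧
    (0 ≤ varOn (P.Omega n) (fun l => (P.Z l : ℝ) + f (n - P.Lfn l) - a * (P.Lfn l : ℝ)) -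
        c * (P.L : ℝ)) ∧
    c * (n : ℝ) ≤ P.varK n := by
  classical
  have hL := P.L_pos
  have hS := size_pos P
  have hSR : (0:ℝ) < (P.size : ℝ) := by exact_mod_cast hS
  have hLR : (0:ℝ) < (P.L : ℝ) := by exact_mod_cast hL
  have ha2 : 0 < a ^ 2 := by
    rcases lt_or_ge 0 (a ^ 2) with h | h
    · exact h
    · exfalso
      have h0 : a ^ 2 = 0 := le_antisymm h (sq_nonneg a)
      rw [h0, zero_div] at hcle
      linarith
  -- strict monotonicity of H (degenerate case ruled out via hbase)
  have hH : ∀ m, 1 ≤ m → P.H m < P.H (m + 1) := by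
    by_cases h2L : 2 ≤ P.L
    · exact H_incr P (Or.inl h2L)
    by_cases h2c : 2 ≤ P.c 1
    · exact H_incr P (Or.inr h2c)
    · exfalso
      have hL1 : P.L = 1 := by omega
      have hc1 : P.c 1 = 1 := by have := P.c1_pos; omega
      have hconst := H_const_of_degenerate P hL1 hc1
      have hOempty : P.Omega N = ∅ := by
        ext l
        simp only [PLRS.Omega, Set.mem_setOf_eq, Set.mem_empty_iff_false, iff_false]
        rintro ⟨hld, hlo, hhi⟩
        rw [hconst N (by omega)] at hlo
        rw [hconst (N + 1) (by omega)] at hhi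
        omega
      have hB := hbase N (by omega) (le_refl N)
      rw [PLRS.varK, hOempty, varOn_empty] at hB
      have hNpos : (0:ℝ) < (N:ℝ) := by exact_mod_cast (by omega : 0 < N)
      nlinarith
  have hn2L : 2 * P.L < n := by omega
  -- Ω_n as a finset
  have hfin := omega_finite P hH (r := n) (by omega)
  obtain ⟨A, hAco⟩ : ∃ A : Finset (List ℕ), ↑A = P.Omega n :=
    ⟨hfin.toFinset, hfin.coe_toFinset⟩
  have hmemA : ∀ x, x ∈ A ↔ x ∈ P.Omega n := fun x => by rw [← Finset.mem_coe, hAco]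
  -- nonemptiness of intermediate Ω's
  have hOr : ∀ r, P.L < r → r < n → (P.Omega r).Nonempty := by
    intro r h1 h2
    by_contra h
    have hemp : P.Omega r = ∅ := Set.not_nonempty_iff_eq_empty.mp h
    have h3 := hind r h1 h2
    rw [PLRS.varK, hemp, varOn_empty] at h3
    have h4 : (0:ℝ) < c * r := mul_pos hc (by exact_mod_cast (by omega : 0 < r))
    linarith
  set K : List ℕ → ℝ := fun x => (x.sum : ℝ) with hK
  set G : List ℕ → ℝ := fun x => (P.Z x : ℝ) + P.expectK (n - P.Lfn x) with hG
  set Lf : List ℕ → ℝ := fun x => (P.Lfn x : ℝ) with hLf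
  set T : Finset ℕ := Finset.range P.size with hT
  have hmapsto : ∀ x ∈ A, P.Z x ∈ T := fun x hx =>
    Finset.mem_range.mpr (forward P hH hn2L ((hmemA x).mp hx)).1
  -- per-fiber statistics
  have key : ∀ t ∈ T,
      (∑ x ∈ A.filter (fun x => P.Z x = t), K x
        = ∑ x ∈ A.filter (fun x => P.Z x = t), G x) ∧
      (c * (n : ℝ) * (((A.filter (fun x => P.Z x = t)).card : ℕ) : ℝ)
          - c * ∑ x ∈ A.filter (fun x => P.Z x = t), Lf x
        ≤ ∑ x ∈ A.filter (fun x => P.Z x = t), K x ^ 2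
          - ∑ x ∈ A.filter (fun x => P.Z x = t), G x ^ 2) ∧
      0 < (A.filter (fun x => P.Z x = t)).card := by
    intro t htT
    have ht : t < P.size := Finset.mem_range.mp htT
    have hellL := ell_le_L P ht
    have hellpos := ell_pos P ht
    set r : ℕ := n - P.ell t with hr
    have hrL : P.L < r := by omega
    have hrn : r < n := by omega
    have hDfin := omega_finite P hH (r := r) (by omega)
    set D : Finset (List ℕ) := hDfin.toFinset with hD
    have hDco : ↑D = P.Omega r := hDfin.coe_toFinset
    have hDne : 0 < D.card := by
      obtain ⟨y, hy⟩ := hOr r hrL hrn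
      exact Finset.card_pos.mpr ⟨y, hDfin.mem_toFinset.mpr hy⟩
    have hm : ((D.card : ℝ)) ≠ 0 := by positivity
    have htrans : ∀ g : List ℕ → ℝ,
        ∑ x ∈ A.filter (fun x => P.Z x = t), g x = ∑ y ∈ D, g (P.insertSTL t y) :=
      fun g => fiber_trans P hH hn2L ht (by omega) A D hAco hDco g
    have hcard : (((A.filter (fun x => P.Z x = t)).card : ℕ) : ℝ) = (D.card : ℝ) := by
      have h1 := htrans (fun _ => (1:ℝ))
      simpa using h1
    have hins : ∀ y ∈ D, P.insertSTL t y ∈ P.Omega n ∧ P.Z (P.insertSTL t y) = t ∧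
        P.removeSTL (P.insertSTL t y) = y ∧ (P.insertSTL t y).sum = y.sum + t := by
      intro y hy
      exact backward P hH hn2L ht (by omega)
        (by rw [← Finset.mem_coe, hDco] at hy; exact hy)
    have hKins : ∀ y ∈ D, K (P.insertSTL t y) = K y + (t : ℝ) := by
      intro y hy
      simp only [hK]
      rw [(hins y hy).2.2.2]
      push_cast
      ring
    have hfK : ∑ x ∈ A.filter (fun x => P.Z x = t), K x
        = (∑ y ∈ D, K y) + (D.card : ℝ) * (t : ℝ) := by
      rw [htrans K, Finset.sum_congr rfl hKins, Finset.sum_add_distrib,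
        Finset.sum_const, nsmul_eq_mul]
    have hfK2 : ∑ x ∈ A.filter (fun x => P.Z x = t), K x ^ 2
        = (∑ y ∈ D, K y ^ 2) + 2 * (t : ℝ) * (∑ y ∈ D, K y)
          + (D.card : ℝ) * (t : ℝ) ^ 2 := by
      rw [htrans (fun x => K x ^ 2)]
      have h1 : ∀ y ∈ D, K (P.insertSTL t y) ^ 2
          = K y ^ 2 + 2 * (t:ℝ) * K y + (t:ℝ) ^ 2 := fun y hy => by
        rw [hKins y hy]; ring
      rw [Finset.sum_congr rfl h1, Finset.sum_add_distrib, Finset.sum_add_distrib,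
        ← Finset.mul_sum, Finset.sum_const, nsmul_eq_mul]
    have hGf : ∀ x ∈ A.filter (fun x => P.Z x = t), G x = (t : ℝ) + P.expectK r := by
      intro x hx
      obtain ⟨hxA, hZ⟩ := Finset.mem_filter.mp hx
      simp only [hG]
      have hLfn : P.Lfn x = P.ell t := by rw [PLRS.Lfn, hZ]
      rw [hZ, hLfn, ← hr]
    have hfG : ∑ x ∈ A.filter (fun x => P.Z x = t), G x
        = (D.card : ℝ) * ((t : ℝ) + P.expectK r) := by
      rw [Finset.sum_congr rfl hGf, Finset.sum_const, nsmul_eq_mul, hcard]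
    have hfG2 : ∑ x ∈ A.filter (fun x => P.Z x = t), G x ^ 2
        = (D.card : ℝ) * ((t : ℝ) + P.expectK r) ^ 2 := by
      have h1 : ∀ x ∈ A.filter (fun x => P.Z x = t), G x ^ 2
          = ((t : ℝ) + P.expectK r) ^ 2 := fun x hx => by rw [hGf x hx]
      rw [Finset.sum_congr rfl h1, Finset.sum_const, nsmul_eq_mul, hcard]
    have hLff : ∀ x ∈ A.filter (fun x => P.Z x = t), Lf x = ((P.ell t : ℕ) : ℝ) := by
      intro x hx
      obtain ⟨hxA, hZ⟩ := Finset.mem_filter.mp hx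
      simp only [hLf]
      rw [PLRS.Lfn, hZ]
    have hfL : ∑ x ∈ A.filter (fun x => P.Z x = t), Lf x
        = (D.card : ℝ) * ((P.ell t : ℕ) : ℝ) := by
      rw [Finset.sum_congr rfl hLff, Finset.sum_const, nsmul_eq_mul, hcard]
    have hmu : P.expectK r = (∑ y ∈ D, K y) / (D.card : ℝ) := by
      rw [PLRS.expectK, PLRS.expect, ← hDco, expectOn_coe]
    have hsig : P.varK r = (∑ y ∈ D, K y ^ 2) / (D.card : ℝ)
        - ((∑ y ∈ D, K y) / (D.card : ℝ)) ^ 2 := by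
      rw [PLRS.varK, ← hDco, varOn_coe]
    have hvarKr := hind r hrL hrn
    have hcast : ((r : ℕ) : ℝ) = (n : ℝ) - ((P.ell t : ℕ) : ℝ) := by
      rw [hr, Nat.cast_sub (by omega : P.ell t ≤ n)]
    rw [hcast] at hvarKr
    refine ⟨?_, ?_, ?_⟩
    · rw [hfK, hfG, hmu]
      field_simp
      ring
    · have hREq : (∑ y ∈ D, K y ^ 2) + 2 * (t : ℝ) * (∑ y ∈ D, K y)
          + (D.card : ℝ) * (t : ℝ) ^ 2
          - (D.card : ℝ) * ((t : ℝ) + P.expectK r) ^ 2 = (D.card : ℝ) * P.varK r := by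
        rw [hmu, hsig]
        field_simp
        ring
      calc c * (n : ℝ) * (((A.filter (fun x => P.Z x = t)).card : ℕ) : ℝ)
            - c * ∑ x ∈ A.filter (fun x => P.Z x = t), Lf x
          = (D.card : ℝ) * (c * ((n : ℝ) - ((P.ell t : ℕ) : ℝ))) := by
            rw [hcard, hfL]; ring
        _ ≤ (D.card : ℝ) * P.varK r :=
            mul_le_mul_of_nonneg_left hvarKr (by positivity)
        _ = ∑ x ∈ A.filter (fun x => P.Z x = t), K x ^ 2
            - ∑ x ∈ A.filter (fun x => P.Z x = t), G x ^ 2 := by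
            rw [hfK2, hfG2]
            exact hREq.symm
    · by_contra h
      push_neg at h
      have h0 : (A.filter (fun x => P.Z x = t)).card = 0 := by omega
      have hD0 : (D.card : ℝ) = 0 := by rw [← hcard, h0]; simp
      have hD0' : D.card = 0 := by exact_mod_cast hD0
      omega
  -- global sums via fiberwise decomposition
  have hfibK := Finset.sum_fiberwise_of_maps_to hmapsto K
  have hfibK2 := Finset.sum_fiberwise_of_maps_to hmapsto (fun x => K x ^ 2)
  have hfibG := Finset.sum_fiberwise_of_maps_to hmapsto G
  have hfibG2 := Finset.sum_fiberwise_of_maps_to hmapsto (fun x => G x ^ 2)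
  have hfibL := Finset.sum_fiberwise_of_maps_to hmapsto Lf
  have hfib1 := Finset.sum_fiberwise_of_maps_to hmapsto (fun _ => (1:ℝ))
  have hcards : ∑ t ∈ T, (((A.filter (fun x => P.Z x = t)).card : ℕ) : ℝ)
      = ((A.card : ℕ) : ℝ) := by
    simpa using hfib1
  have hSKeq : ∑ x ∈ A, K x = ∑ x ∈ A, G x := by
    rw [← hfibK, ← hfibG]
    exact Finset.sum_congr rfl (fun t ht => (key t ht).1)
  have hineq : c * (n : ℝ) * ((A.card : ℕ) : ℝ) - c * ∑ x ∈ A, Lf x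
      ≤ ∑ x ∈ A, K x ^ 2 - ∑ x ∈ A, G x ^ 2 := by
    rw [← hfibK2, ← hfibG2, ← hfibL, ← hcards]
    rw [Finset.mul_sum, ← Finset.sum_sub_distrib, Finset.mul_sum, ← Finset.sum_sub_distrib]
    exact Finset.sum_le_sum (fun t ht => by
      have h := (key t ht).2.1
      calc c * (n:ℝ) * (((A.filter (fun x => P.Z x = t)).card : ℕ):ℝ)
            - c * ∑ x ∈ A.filter (fun x => P.Z x = t), Lf x ≤ _ := h)
  have hAne : 0 < A.card := by
    have h0T : (0:ℕ) ∈ T := Finset.mem_range.mpr hS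
    have h1 := (key 0 h0T).2.2
    have h2 : (A.filter (fun x => P.Z x = 0)).card ≤ A.card := Finset.card_filter_le _ _
    omega
  have hMne : ((A.card : ℕ) : ℝ) ≠ 0 := by positivity
  have hMpos : (0:ℝ) < ((A.card : ℕ) : ℝ) := by positivity
  -- expectation of Lfn
  have hEL : P.expect n (fun l => (P.Lfn l : ℝ)) = (∑ x ∈ A, Lf x) / ((A.card : ℕ) : ℝ) := by
    rw [PLRS.expect, ← hAco, expectOn_coe]
  have hLfle : ∀ x ∈ A, Lf x ≤ (P.L : ℝ) := by
    intro x hx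
    have hZlt := (forward P hH hn2L ((hmemA x).mp hx)).1
    have h1 : P.Lfn x ≤ P.L := ell_le_L P hZlt
    simp only [hLf]
    exact_mod_cast h1
  have hLfnn : ∀ x ∈ A, 0 ≤ Lf x := fun x hx => by simp [hLf]
  have hELle : P.expect n (fun l => (P.Lfn l : ℝ)) ≤ (P.L : ℝ) := by
    rw [hEL, div_le_iff₀ hMpos]
    calc ∑ x ∈ A, Lf x ≤ ∑ x ∈ A, (P.L : ℝ) := Finset.sum_le_sum hLfle
      _ = ((A.card : ℕ) : ℝ) * (P.L : ℝ) := by rw [Finset.sum_const, nsmul_eq_mul]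
      _ = (P.L : ℝ) * ((A.card : ℕ) : ℝ) := by ring
  -- Y agrees with G - (a n + b) on A
  have hYG : varOn (P.Omega n) (fun l => (P.Z l : ℝ) + f (n - P.Lfn l) - a * (P.Lfn l : ℝ))
      = varOn ↑A G := by
    rw [← hAco]
    have hpt : ∀ x ∈ A,
        (fun l => (P.Z l : ℝ) + f (n - P.Lfn l) - a * (P.Lfn l : ℝ)) x
          = (fun x => G x - (a * (n : ℝ) + b)) x := by
      intro x hx
      have hZlt := (forward P hH hn2L ((hmemA x).mp hx)).1
      have h1 : P.Lfn x ≤ P.L := ell_le_L P hZlt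
      have hfr := hf (n - P.Lfn x) (by omega)
      have hcast : ((n - P.Lfn x : ℕ) : ℝ) = (n : ℝ) - (P.Lfn x : ℝ) :=
        Nat.cast_sub (by omega)
    
      simp only [hG]
      rw [hfr, hcast]
      ring
    rw [varOn_congr A hpt, varOn_sub_const A hAne G _]
  -- variances as finite sums
  have hvarK : P.varK n = (∑ x ∈ A, K x ^ 2) / ((A.card : ℕ) : ℝ)
      - ((∑ x ∈ A, K x) / ((A.card : ℕ) : ℝ)) ^ 2 := by
    rw [PLRS.varK, ← hAco, varOn_coe]
  have hvarG : varOn ↑A G = (∑ x ∈ A, G x ^ 2) / ((A.card : ℕ) : ℝ)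
      - ((∑ x ∈ A, G x) / ((A.card : ℕ) : ℝ)) ^ 2 := varOn_coe A G
  -- conjunct 1
  have hone : varOn (P.Omega n) (fun l => (P.Z l : ℝ) + f (n - P.Lfn l) - a * (P.Lfn l : ℝ))
      - c * P.expect n (fun l => (P.Lfn l : ℝ)) ≤ P.varK n - c * (n : ℝ) := by
    rw [hYG, hEL]
    have e1 : P.varK n - varOn ↑A G
        = ((∑ x ∈ A, K x ^ 2) - (∑ x ∈ A, G x ^ 2)) / ((A.card : ℕ) : ℝ) := by
      rw [hvarK, hvarG, hSKeq]
      ring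
    have e2 : (c * (n : ℝ) * ((A.card : ℕ) : ℝ) - c * ∑ x ∈ A, Lf x) / ((A.card : ℕ) : ℝ)
        ≤ ((∑ x ∈ A, K x ^ 2) - (∑ x ∈ A, G x ^ 2)) / ((A.card : ℕ) : ℝ) :=
      (div_le_div_iff_of_pos_right hMpos).mpr hineq
    have e3 : (c * (n : ℝ) * ((A.card : ℕ) : ℝ) - c * ∑ x ∈ A, Lf x) / ((A.card : ℕ) : ℝ)
        = c * (n : ℝ) - c * ((∑ x ∈ A, Lf x) / ((A.card : ℕ) : ℝ)) := by
      field_simp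
      try ring
    linarith
  -- conjunct 2
  have htwo : varOn (P.Omega n) (fun l => (P.Z l : ℝ) + f (n - P.Lfn l) - a * (P.Lfn l : ℝ))
      - c * (P.L : ℝ)
      ≤ varOn (P.Omega n) (fun l => (P.Z l : ℝ) + f (n - P.Lfn l) - a * (P.Lfn l : ℝ))
      - c * P.expect n (fun l => (P.Lfn l : ℝ)) := by
    have h1 : c * P.expect n (fun l => (P.Lfn l : ℝ)) ≤ c * (P.L : ℝ) :=
      mul_le_mul_of_nonneg_left hELle hc.le
    linarith
  -- conjunct 3
  have hthree : 0 ≤ varOn (P.Omega n)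
      (fun l => (P.Z l : ℝ) + f (n - P.Lfn l) - a * (P.Lfn l : ℝ)) - c * (P.L : ℝ) := by
    have h1 := hNvar n hn
    have h2 : c * (P.L : ℝ) ≤ a ^ 2 / (2 * (P.size : ℝ)) := by
      have h3 : c * (P.L : ℝ) ≤ (a ^ 2 / (2 * (P.size : ℝ) * (P.L : ℝ))) * (P.L : ℝ) :=
        mul_le_mul_of_nonneg_right hcle hLR.le
      have h4 : (a ^ 2 / (2 * (P.size : ℝ) * (P.L : ℝ))) * (P.L : ℝ)
          = a ^ 2 / (2 * (P.size : ℝ)) := by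
        field_simp
      linarith
    linarith
  exact ⟨hone, htwo, hthree, by linarith⟩
end
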